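/- arXiv:2011.05072 — 7 statements merged into one kernel-verified Lean document; each statement's English description precedes it below -/
import Mathlib

section
/- Assume that F admits a density. Then the bid v maximizes the expected utility: if there exists a < v (respectively b > v) such that F is constant on [a,v] (respectively [v,b]), then [a,v] (respectively [v,b]) is contained in the set of maximizers of b ↦ E[U_t(b)]; otherwise the set of maximizers of b ↦ E[U_t(b)] over [0,1] is exactly {v}. In either case, max_{b ∈ [0,1]} Σ_{t=1}^T E[U_t(b)] = Σ_{t=1}^T E[(v − M_t)·1{M_t ≤ v}]. -/
open MeasureTheory ProbabilityTheory Set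

/-! By independence of `V_t` and `M_t`, `E[U_t(b)] = E[(v - M_t) 1{M_t ≤ b}]`, and the integrand
is pointwise maximal at `b = v`. The gap `E[U_t(v)] - E[U_t(b)]` is the expectation of `|v - M_t|`
on the event that `M_t` lies between `b` and `v`, so it vanishes iff that event is null up to
`{M_t = v}`; this atom carries no mass because `F` is continuous. Hence the maximizers are exactly
the bids `b` with `F b = F v`. -/

open Filter

noncomputable def utility (v m b : ℝ) : ℝ := (v - m) * if m ≤ b then 1 else 0

theorem utility_le_utility_self (v m b : ℝ) : utility v m b ≤ utility v m v := by
  unfold utility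
  split_ifs <;> linarith

theorem utility_eq_utility_self_iff {v m : ℝ} (hm : m ≠ v) (b : ℝ) :
    utility v m b = utility v m v ↔ (m ≤ b ↔ m ≤ v) := by
  have hvm : v - m ≠ 0 := sub_ne_zero.2 hm.symm
  unfold utility
  by_cases hb : m ≤ b <;> by_cases hv : m ≤ v <;> simp [hb, hv, hvm, hvm.symm]

theorem utility_comp_eq_indicator {Ω : Type*} (V M : Ω → ℝ) (b : ℝ) :
    (fun ω => utility (V ω) (M ω) b) = {ω | M ω ≤ b}.indicator (V - M) := by
  ext ω
  simp [utility, Set.indicator_apply]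

section

variable {Ω : Type*} [MeasurableSpace Ω] {μ : Measure Ω} {V M : Ω → ℝ}

theorem MeasureTheory.Integrable.utility (hV : Integrable V μ) (hM : Integrable M μ)
    (hMm : Measurable M) (b : ℝ) : Integrable (fun ω => utility (V ω) (M ω) b) μ := by
  rw [utility_comp_eq_indicator]
  exact (hV.sub hM).indicator (hMm measurableSet_Iic)

theorem integral_utility_eq_of_indepFun [IsProbabilityMeasure μ] (hVM : IndepFun V M μ)
    (hV : Integrable V μ) (hM : Integrable M μ) (hMm : Measurable M) (b : ℝ) :
    ∫ ω, utility (V ω) (M ω) b ∂μ = ∫ ω, utility (μ[V]) (M ω) b ∂μ := by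
  set g : ℝ → ℝ := fun m => if m ≤ b then 1 else 0
  have hg : Measurable g := measurable_const.ite measurableSet_Iic measurable_const
  have hcentered : ∫ ω, (V ω - μ[V]) * g (M ω) ∂μ = 0 := by
    have hind : IndepFun (fun ω => V ω - μ[V]) (fun ω => g (M ω)) μ :=
      hVM.comp (measurable_id.sub_const _) hg
    rw [hind.integral_fun_mul_eq_mul_integral
      (hV.sub (integrable_const _)).aestronglyMeasurable
      (hg.comp hMm).aestronglyMeasurable]
    simp [integral_sub hV (integrable_const _)]
  rw [← sub_eq_zero, ← integral_sub (hV.utility hM hMm b)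
    ((integrable_const _).utility hM hMm b), ← hcentered]
  congr 1 with ω
  simp only [utility, g]
  ring

theorem measure_setOf_le_eq_iff_ae_eq [IsFiniteMeasure μ] (hMm : Measurable M) (b c : ℝ) :
    μ {ω | M ω ≤ b} = μ {ω | M ω ≤ c} ↔
      {ω | M ω ≤ b} =ᵐ[μ] {ω | M ω ≤ c} := by
  refine ⟨fun h => ?_, measure_congr⟩
  rcases le_total b c with hbc | hcb
  · exact ae_eq_of_subset_of_measure_ge (fun ω hω => le_trans hω hbc) h.ge
      (hMm measurableSet_Iic).nullMeasurableSet (measure_ne_top _ _)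
  · exact (ae_eq_of_subset_of_measure_ge (fun ω hω => le_trans hω hcb) h.le
      (hMm measurableSet_Iic).nullMeasurableSet (measure_ne_top _ _)).symm

theorem integral_utility_le_integral_utility_self [IsFiniteMeasure μ] (hM : Integrable M μ)
    (hMm : Measurable M) (v b : ℝ) :
    ∫ ω, utility v (M ω) b ∂μ ≤ ∫ ω, utility v (M ω) v ∂μ :=
  integral_mono ((integrable_const v).utility hM hMm b) ((integrable_const v).utility hM hMm v)
    fun ω => utility_le_utility_self v (M ω) b

theorem integral_utility_eq_integral_utility_self_iff [IsFiniteMeasure μ] (hM : Integrable M μ)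
    (hMm : Measurable M) {v : ℝ} (hatom : μ {ω | M ω = v} = 0) (b : ℝ) :
    ∫ ω, utility v (M ω) b ∂μ = ∫ ω, utility v (M ω) v ∂μ ↔
      μ {ω | M ω ≤ b} = μ {ω | M ω ≤ v} := by
  have hint := (integrable_const v).utility hM hMm
  have hne : ∀ᵐ ω ∂μ, M ω ≠ v := ae_iff.2 (by simpa using hatom)
  calc _ ↔ ∫ ω, (utility v (M ω) v - utility v (M ω) b) ∂μ = 0 := by
        rw [integral_sub (hint v) (hint b), sub_eq_zero, eq_comm]
    _ ↔ ∀ᵐ ω ∂μ, utility v (M ω) b = utility v (M ω) v := by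
        rw [integral_eq_zero_iff_of_nonneg
          (fun ω => sub_nonneg.2 (utility_le_utility_self v (M ω) b)) ((hint v).sub (hint b))]
        exact eventually_congr (Eventually.of_forall fun ω => by simp [sub_eq_zero, eq_comm])
    _ ↔ ∀ᵐ ω ∂μ, (M ω ≤ b ↔ M ω ≤ v) :=
        eventually_congr (hne.mono fun ω hω => utility_eq_utility_self_iff hω b)
    _ ↔ _ := eventuallyEq_set.symm.trans (measure_setOf_le_eq_iff_ae_eq hMm b v).symm

theorem measure_setOf_eq_eq_zero_of_continuousWithinAt [IsProbabilityMeasure μ]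
    (hMm : Measurable M) {v : ℝ}
    (h : ContinuousWithinAt (fun x => (μ {ω | M ω ≤ x}).toReal) (Iic v) v) :
    μ {ω | M ω = v} = 0 := by
  have := Measure.isProbabilityMeasure_map (μ := μ) hMm.aemeasurable
  have hcdf : cdf (μ.map M) = fun x => (μ {ω | M ω ≤ x}).toReal := by
    ext x
    rw [cdf_eq_real, map_measureReal_apply hMm measurableSet_Iic]
    rfl
  have := (cdf (μ.map M)).measure_singleton v
  rwa [measure_cdf, Measure.map_apply hMm (measurableSet_singleton v), hcdf, h.leftLim_eq,
    sub_self, ENNReal.ofReal_zero] at this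

theorem measure_setOf_eq_eq_zero_of_cdf_eq_integral [IsProbabilityMeasure μ]
    (hMm : Measurable M) {f : ℝ → ℝ}
    (hF : ∀ x, (μ {ω | M ω ≤ x}).toReal = ∫ u in Iic x, f u) (v : ℝ) :
    μ {ω | M ω = v} = 0 := by
  by_cases hf : IntegrableOn f (Iic v)
  · apply measure_setOf_eq_eq_zero_of_continuousWithinAt hMm
    simp_rw [hF]
    exact hf.continuousOn_Iic_primitive_Iic v (mem_Iic.2 le_rfl)
  · -- junk value: the integral vanishes, hence so does `μ {M ≤ v}`
    have hle := hF v
    rw [integral_undef hf, ENNReal.toReal_eq_zero_iff] at hle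
    exact measure_mono_null (fun ω hω => le_of_eq hω) (hle.resolve_right (measure_ne_top _ _))

end

theorem setOf_maximizer_eq {G F : ℝ → ℝ} {s : Set ℝ} {v : ℝ} (hv : v ∈ s)
    (hmax : ∀ c, G c ≤ G v) (hG : ∀ b, G b = G v ↔ F b = F v) :
    {b | b ∈ s ∧ ∀ c ∈ s, G c ≤ G b} = {b | b ∈ s ∧ F b = F v} := by
  ext b
  refine and_congr_right fun _ => ?_
  rw [← hG]
  exact ⟨fun h => le_antisymm (hmax b) (h v hv), fun h c _ => h ▸ hmax c⟩

theorem stmt0_general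
    {Ω : Type*} [MeasurableSpace Ω] (μ : Measure Ω) [IsProbabilityMeasure μ]
    (V M : ℕ → Ω → ℝ) (v : ℝ) (F f : ℝ → ℝ) (T : ℕ)
    (hVmeas : ∀ t, Measurable (V t)) (hMmeas : ∀ t, Measurable (M t))
    (hVrange : ∀ t ω, V t ω ∈ Icc (0:ℝ) 1)
    (hMrange : ∀ t ω, M t ω ∈ Icc (0:ℝ) 1)
    (hVmean : ∀ t, ∫ ω, V t ω ∂μ = v)
    (hVM : ∀ t, IndepFun (V t) (M t) μ)
    -- F is the cumulative distribution function of the maximal opponent bids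
    (hF : ∀ t x, (μ {ω | M t ω ≤ x}).toReal = F x)
    -- F admits a density f
    (hdens : ∀ x, F x = ∫ u in Iic x, f u)
    -- expected utility of a fixed bid b at round t
    (EU : ℕ → ℝ → ℝ)
    (hEU : ∀ t b, EU t b
        = ∫ ω, (V t ω - M t ω) * (if M t ω ≤ b then (1:ℝ) else 0) ∂μ) :
    ((∀ a ∈ Icc (0:ℝ) 1, a < v → (∀ x ∈ Icc a v, F x = F v) → ∀ t,
        Icc a v ⊆ {b | b ∈ Icc (0:ℝ) 1 ∧ ∀ c ∈ Icc (0:ℝ) 1, EU t c ≤ EU t b}) ∧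
     (∀ b ∈ Icc (0:ℝ) 1, v < b → (∀ x ∈ Icc v b, F x = F v) → ∀ t,
        Icc v b ⊆ {b' | b' ∈ Icc (0:ℝ) 1 ∧ ∀ c ∈ Icc (0:ℝ) 1, EU t c ≤ EU t b'}) ∧
     ((¬ ∃ a ∈ Icc (0:ℝ) 1, a < v ∧ ∀ x ∈ Icc a v, F x = F v) →
      (¬ ∃ b ∈ Icc (0:ℝ) 1, v < b ∧ ∀ x ∈ Icc v b, F x = F v) →
      ∀ t, {b | b ∈ Icc (0:ℝ) 1 ∧ ∀ c ∈ Icc (0:ℝ) 1, EU t c ≤ EU t b} = {v})) ∧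
    IsGreatest ((fun b => ∑ t ∈ Finset.Icc 1 T, EU t b) '' Icc (0:ℝ) 1)
      (∑ t ∈ Finset.Icc 1 T,
        ∫ ω, (v - M t ω) * (if M t ω ≤ v then (1:ℝ) else 0) ∂μ) := by
  have hVint t : Integrable (V t) μ :=
    .of_mem_Icc 0 1 (hVmeas t).aemeasurable (ae_of_all _ (hVrange t))
  have hMint t : Integrable (M t) μ :=
    .of_mem_Icc 0 1 (hMmeas t).aemeasurable (ae_of_all _ (hMrange t))
  have hv : v ∈ Icc (0:ℝ) 1 :=
    hVmean 0 ▸ (convex_Icc 0 1).integral_mem isClosed_Icc (ae_of_all _ (hVrange 0)) (hVint 0)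
  have hEU' t b : EU t b = ∫ ω, utility v (M t ω) b ∂μ := by
    rw [hEU, ← hVmean t]
    exact integral_utility_eq_of_indepFun (hVM t) (hVint t) (hMint t) (hMmeas t) b
  have hmax t c : EU t c ≤ EU t v := by
    simpa only [hEU'] using integral_utility_le_integral_utility_self (hMint t) (hMmeas t) v c
  have hFeq t b : EU t b = EU t v ↔ F b = F v := by
    have hatom := measure_setOf_eq_eq_zero_of_cdf_eq_integral (hMmeas t)
      (fun x => (hF t x).trans (hdens x)) v
    rw [hEU', hEU', integral_utility_eq_integral_utility_self_iff (hMint t) (hMmeas t) hatom,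
      ← hF t b, ← hF t v,
      ENNReal.toReal_eq_toReal_iff' (measure_ne_top _ _) (measure_ne_top _ _)]
  have hFmono : Monotone F := fun x y hxy => by
    rw [← hF 0 x, ← hF 0 y]
    exact ENNReal.toReal_mono (measure_ne_top _ _) (measure_mono fun ω hω => le_trans hω hxy)
  simp_rw [setOf_maximizer_eq hv (hmax _) (hFeq _)]
  refine ⟨⟨?_, ?_, ?_⟩, ?_⟩
  · exact fun a ha _ hconst _ b hb => ⟨⟨ha.1.trans hb.1, hb.2.trans hv.2⟩, hconst b hb⟩
  · exact fun c hc _ hconst _ b hb => ⟨⟨hv.1.trans hb.1, hb.2.trans hc.2⟩, hconst b hb⟩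
  · refine fun hleft hright _ => Set.eq_singleton_iff_unique_mem.2 ⟨⟨hv, rfl⟩, ?_⟩
    rintro b ⟨hb, hFb⟩
    by_contra hne
    rcases lt_or_gt_of_ne hne with hlt | hgt
    · exact hleft ⟨b, hb, hlt, fun x hx => le_antisymm (hFmono hx.2) (hFb ▸ hFmono hx.1)⟩
    · exact hright ⟨b, hb, hgt, fun x hx => le_antisymm (hFb ▸ hFmono hx.2) (hFmono hx.1)⟩
  · refine ⟨⟨v, hv, Finset.sum_congr rfl fun t _ => hEU' t v⟩, ?_⟩
    rintro _ ⟨b, -, rfl⟩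
    exact Finset.sum_le_sum fun t _ => (hmax t b).trans_eq (hEU' t v)

/-- In the second-price auction model, if `F` admits a density then bidding the
value `v` maximizes the expected utility `b ↦ E[U_t(b)]` over `[0,1]`: any interval
`[a,v]` (resp. `[v,b]`) on which `F` is constant is contained in the set of maximizers,
and if no such interval exists the set of maximizers is exactly `{v}`.  In either case
`max_{b ∈ [0,1]} Σ_{t=1}^T E[U_t(b)] = Σ_{t=1}^T E[(v − M_t)·1{M_t ≤ v}]`. -/
theorem stmt0
    {Ω : Type*} [MeasurableSpace Ω] (μ : Measure Ω) [IsProbabilityMeasure μ]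
    (V M : ℕ → Ω → ℝ) (v : ℝ) (F f : ℝ → ℝ) (T : ℕ)
    (hVmeas : ∀ t, Measurable (V t)) (hMmeas : ∀ t, Measurable (M t))
    (hVrange : ∀ t ω, V t ω ∈ Icc (0:ℝ) 1)
    (hMrange : ∀ t ω, M t ω ∈ Icc (0:ℝ) 1)
    (hVmean : ∀ t, ∫ ω, V t ω ∂μ = v)
    (hiid : ∀ s t, Measure.map (fun ω => (V s ω, M s ω)) μ
        = Measure.map (fun ω => (V t ω, M t ω)) μ)
    (hpairindep : iIndepFun (fun t ω => (V t ω, M t ω)) μ)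
    (hVM : ∀ t, IndepFun (V t) (M t) μ)
    -- F is the cumulative distribution function of the maximal opponent bids
    (hF : ∀ t x, (μ {ω | M t ω ≤ x}).toReal = F x)
    -- F admits a density f
    (hfmeas : Measurable f) (hfnonneg : ∀ x, 0 ≤ f x)
    (hdens : ∀ x, F x = ∫ u in Iic x, f u)
    -- expected utility of a fixed bid b at round t
    (EU : ℕ → ℝ → ℝ)
    (hEU : ∀ t b, EU t b
        = ∫ ω, (V t ω - M t ω) * (if M t ω ≤ b then (1:ℝ) else 0) ∂μ) :
    ((∀ a ∈ Icc (0:ℝ) 1, a < v → (∀ x ∈ Icc a v, F x = F v) → ∀ t,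
        Icc a v ⊆ {b | b ∈ Icc (0:ℝ) 1 ∧ ∀ c ∈ Icc (0:ℝ) 1, EU t c ≤ EU t b}) ∧
     (∀ b ∈ Icc (0:ℝ) 1, v < b → (∀ x ∈ Icc v b, F x = F v) → ∀ t,
        Icc v b ⊆ {b' | b' ∈ Icc (0:ℝ) 1 ∧ ∀ c ∈ Icc (0:ℝ) 1, EU t c ≤ EU t b'}) ∧
     ((¬ ∃ a ∈ Icc (0:ℝ) 1, a < v ∧ ∀ x ∈ Icc a v, F x = F v) →
      (¬ ∃ b ∈ Icc (0:ℝ) 1, v < b ∧ ∀ x ∈ Icc v b, F x = F v) →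
      ∀ t, {b | b ∈ Icc (0:ℝ) 1 ∧ ∀ c ∈ Icc (0:ℝ) 1, EU t c ≤ EU t b} = {v})) ∧
    IsGreatest ((fun b => ∑ t ∈ Finset.Icc 1 T, EU t b) '' Icc (0:ℝ) 1)
      (∑ t ∈ Finset.Icc 1 T,
        ∫ ω, (v - M t ω) * (if M t ω ≤ v then (1:ℝ) else 0) ∂μ) :=
  stmt0_general μ V M v F f T hVmeas hMmeas hVrange hMrange hVmean hVM hF hdens EU hEU
end

section
/- If F admits a density f satisfying β̲ ≤ f(x) ≤ β for all x ∈ [0,1] for some constants β̲, β > 0, then the instantaneous expected regret r(b) := E[U_t(v)] − E[U_t(b)] of any bid b ∈ [0,1] satisfies (β̲/2)(b − v)² ≤ r(b) ≤ (β/2)(b − v)². Consequently, for any sequence of bids (B_t), (β̲/2) Σ_{t=1}^T E[(B_t − v)²] ≤ R_T ≤ (β/2) Σ_{t=1}^T E[(B_t − v)²]. -/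
open MeasureTheory ProbabilityTheory Set

/-!
Since `V_t` is independent of `M_t`, whose law has density `f`, the expected utility of a fixed bid
is `E[U_t(b)] = ∫_{u ≤ b} (v - u) f(u) du`, so the instantaneous regret is
`r(b) = ∫_b^v (v - u) f(u) du`. As `∫_b^v (v - u) du = (b - v)² / 2` and `(v - u)` has the sign
of `v - b` on the interval, the bounds `β̲ ≤ f ≤ β` give `β̲/2 (b - v)² ≤ r(b) ≤ β/2 (b - v)²`;
in particular `v` maximises `Σ_t E[U_t(b)]`. Since `B_t` is independent of `(V_t, M_t)`, Fubini
gives `E[U_t(B_t)] = E[φ_t(B_t)]` with `φ_t(b) = E[U_t(b)]`, and integrating the pointwise bounds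
at `b = B_t` and summing over the rounds bounds `R_T`.
-/

theorem integral_sub_mul_nonneg {g : ℝ → ℝ} {b v : ℝ} (hg : ∀ u ∈ uIcc b v, 0 ≤ g u) :
    0 ≤ ∫ u in b..v, (v - u) * g u := by
  rcases le_total b v with hbv | hvb
  · exact intervalIntegral.integral_nonneg hbv fun u hu =>
      mul_nonneg (by linarith [hu.2]) (hg u (Icc_subset_uIcc hu))
  · rw [intervalIntegral.integral_symm, ← intervalIntegral.integral_neg]
    refine intervalIntegral.integral_nonneg hvb fun u hu => ?_
    rw [← neg_mul, neg_sub]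
    exact mul_nonneg (by linarith [hu.1]) (hg u (Icc_subset_uIcc' hu))

theorem integral_sub_id (b v : ℝ) : ∫ u in b..v, (v - u) = (b - v) ^ 2 / 2 := by
  rw [intervalIntegral.integral_comp_sub_left (fun x => x), integral_id]
  ring

theorem integral_sub_mul_mem_Icc {f : ℝ → ℝ} {lo hi b v : ℝ}
    (hf : IntervalIntegrable f volume b v) (hbd : ∀ u ∈ uIcc b v, f u ∈ Icc lo hi) :
    ∫ u in b..v, (v - u) * f u ∈ Icc (lo / 2 * (b - v) ^ 2) (hi / 2 * (b - v) ^ 2) := by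
  have hint : ∀ c : ℝ, ∫ u in b..v, (v - u) * (f u - c)
      = (∫ u in b..v, (v - u) * f u) - c / 2 * (b - v) ^ 2 := by
    intro c
    have hsplit : (fun u => (v - u) * (f u - c)) = fun u => (v - u) * f u - c * (v - u) := by
      funext u; ring
    rw [hsplit, intervalIntegral.integral_sub (hf.continuousOn_mul (by fun_prop))
      (Continuous.intervalIntegrable (by fun_prop) _ _), intervalIntegral.integral_const_mul,
      integral_sub_id]
    ring
  have hlo := integral_sub_mul_nonneg fun u hu => sub_nonneg.2 (hbd u hu).1
  have hhi := integral_sub_mul_nonneg (g := fun u => -(f u - hi)) fun u hu =>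
    neg_nonneg.2 (sub_nonpos.2 (hbd u hu).2)
  simp only [mul_neg, intervalIntegral.integral_neg, hint] at hlo hhi
  constructor <;> linarith

theorem integrable_mul_of_support_subset_Icc {f g : ℝ → ℝ} {a b C : ℝ} (hf : Measurable f)
    (hsupp : ∀ x ∉ Icc a b, f x = 0) (hbd : ∀ x ∈ Icc a b, |f x| ≤ C) (hg : Continuous g) :
    Integrable (fun x => g x * f x) := by
  have hon : IntegrableOn f (Icc a b) :=
    Measure.integrableOn_of_bounded measure_Icc_lt_top.ne hf.aestronglyMeasurable
      (ae_restrict_of_forall_mem measurableSet_Icc hbd)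
  refine (integrableOn_iff_integrable_of_support_subset fun x hx => ?_).1
    (hon.continuousOn_mul hg.continuousOn isCompact_Icc)
  by_contra h
  simp [hsupp x h] at hx

section

variable {Ω : Type*} [MeasurableSpace Ω] {μ : Measure Ω}

theorem map_eq_withDensity_of_cdf [IsFiniteMeasure μ] {X : Ω → ℝ} (hX : Measurable X)
    {f : ℝ → ℝ} (hf0 : ∀ x, 0 ≤ f x) (hf : Integrable f)
    (hcdf : ∀ x, μ.real {ω | X ω ≤ x} = ∫ u in Iic x, f u) :
    μ.map X = volume.withDensity (fun u => ENNReal.ofReal (f u)) := by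
  have := isFiniteMeasure_withDensity_ofReal hf.hasFiniteIntegral
  refine Measure.ext_of_Iic _ _ fun x => ?_
  rw [Measure.map_apply hX measurableSet_Iic, withDensity_apply _ measurableSet_Iic,
    ← ofReal_integral_eq_lintegral_ofReal hf.integrableOn (.of_forall hf0), ← hcdf,
    measureReal_def, ENNReal.ofReal_toReal (measure_ne_top μ _)]
  rfl

theorem integral_comp_eq_integral_mul_of_map_eq_withDensity {X : Ω → ℝ} (hX : Measurable X)
    {f : ℝ → ℝ} (hfm : Measurable f) (hf0 : ∀ x, 0 ≤ f x)
    (hlaw : μ.map X = volume.withDensity (fun u => ENNReal.ofReal (f u)))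
    {g : ℝ → ℝ} (hg : AEStronglyMeasurable g (μ.map X)) :
    ∫ ω, g (X ω) ∂μ = ∫ u, f u * g u := by
  rw [← integral_map hX.aemeasurable hg, hlaw, integral_withDensity_eq_integral_toReal_smul
    hfm.ennreal_ofReal (.of_forall fun _ => ENNReal.ofReal_lt_top)]
  simp only [ENNReal.toReal_ofReal (hf0 _), smul_eq_mul]

theorem integral_sub_mul_ite_eq_setIntegral [IsFiniteMeasure μ] {V M : Ω → ℝ}
    (hV : Integrable V μ) (hM : Integrable M μ) (hMm : Measurable M) (hVM : IndepFun V M μ)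
    {f : ℝ → ℝ} (hfm : Measurable f) (hf0 : ∀ x, 0 ≤ f x)
    (hlaw : μ.map M = volume.withDensity (fun u => ENNReal.ofReal (f u))) (b : ℝ) :
    ∫ ω, (V ω - M ω) * (if M ω ≤ b then 1 else 0) ∂μ = ∫ u in Iic b, (μ[V] - u) * f u := by
  set k : ℝ → ℝ := fun u => if u ≤ b then 1 else 0
  have hk : Measurable k := measurable_const.ite measurableSet_Iic measurable_const
  have hkM : AEStronglyMeasurable (fun ω => k (M ω)) μ := (hk.comp hMm).aestronglyMeasurable
  have hk_le : ∀ᵐ ω ∂μ, ‖k (M ω)‖ ≤ 1 := .of_forall fun ω => by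
    by_cases h : M ω ≤ b <;> simp [k, h]
  have hVk : ∫ ω, V ω * k (M ω) ∂μ = μ[V] * ∫ ω, k (M ω) ∂μ :=
    hVM.integral_fun_comp_mul_comp (f := id) hV.aemeasurable hMm.aemeasurable
      aestronglyMeasurable_id hk.aestronglyMeasurable
  calc ∫ ω, (V ω - M ω) * k (M ω) ∂μ
      = ∫ ω, V ω * k (M ω) ∂μ - ∫ ω, M ω * k (M ω) ∂μ := by
        simp only [sub_mul]
        exact integral_sub (hV.mul_bdd hkM hk_le) (hM.mul_bdd hkM hk_le)
    _ = ∫ ω, (μ[V] - M ω) * k (M ω) ∂μ := by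
        simp only [sub_mul]
        rw [integral_sub ((integrable_const _).mul_bdd hkM hk_le) (hM.mul_bdd hkM hk_le),
          integral_const_mul, hVk]
    _ = ∫ u, f u * ((μ[V] - u) * k u) :=
        integral_comp_eq_integral_mul_of_map_eq_withDensity hMm hfm hf0 hlaw
          ((measurable_const.sub measurable_id).mul hk).aestronglyMeasurable
    _ = ∫ u in Iic b, (μ[V] - u) * f u := by
        rw [← integral_indicator measurableSet_Iic]
        congr 1; funext u
        by_cases h : u ≤ b <;> simp [k, h, mul_comm]

theorem integral_mem_Icc_of_forall_mem_Icc [IsProbabilityMeasure μ] {X : Ω → ℝ}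
    (hX : Measurable X) {a b : ℝ} (h : ∀ ω, X ω ∈ Icc a b) : ∫ ω, X ω ∂μ ∈ Icc a b := by
  have hint : Integrable X μ := .of_mem_Icc a b hX.aemeasurable (.of_forall h)
  constructor
  · simpa using integral_mono (integrable_const a) hint fun ω => (h ω).1
  · simpa using integral_mono hint (integrable_const b) fun ω => (h ω).2

theorem integral_utility_sub_mem_Icc [IsProbabilityMeasure μ] {V M : Ω → ℝ}
    (hVm : Measurable V) (hMm : Measurable M) (hV : ∀ ω, V ω ∈ Icc 0 1)
    (hM : ∀ ω, M ω ∈ Icc 0 1) (hVM : IndepFun V M μ) {f : ℝ → ℝ} (hfm : Measurable f)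
    {lo hi : ℝ} (hlo : 0 ≤ lo) (hbd : ∀ x ∈ Icc (0:ℝ) 1, f x ∈ Icc lo hi)
    (hsupp : ∀ x ∉ Icc (0:ℝ) 1, f x = 0)
    (hcdf : ∀ x, μ.real {ω | M ω ≤ x} = ∫ u in Iic x, f u) {b : ℝ} (hb : b ∈ Icc 0 1) :
    (∫ ω, (V ω - M ω) * (if M ω ≤ μ[V] then 1 else 0) ∂μ)
        - ∫ ω, (V ω - M ω) * (if M ω ≤ b then 1 else 0) ∂μ
      ∈ Icc (lo / 2 * (b - μ[V]) ^ 2) (hi / 2 * (b - μ[V]) ^ 2) := by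
  have hf0 : ∀ x, 0 ≤ f x := fun x => by
    by_cases hx : x ∈ Icc (0:ℝ) 1
    · exact hlo.trans (hbd x hx).1
    · exact (hsupp x hx).ge
  have hf_abs : ∀ x ∈ Icc (0:ℝ) 1, |f x| ≤ hi := fun x hx =>
    (abs_of_nonneg (hf0 x)).trans_le (hbd x hx).2
  have hfint : Integrable f := by
    simpa using integrable_mul_of_support_subset_Icc hfm hsupp hf_abs continuous_const (g := 1)
  have hgint : Integrable fun u => (μ[V] - u) * f u :=
    integrable_mul_of_support_subset_Icc hfm hsupp hf_abs (by fun_prop)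
  have hφ : ∀ b, ∫ ω, (V ω - M ω) * (if M ω ≤ b then 1 else 0) ∂μ
      = ∫ u in Iic b, (μ[V] - u) * f u :=
    integral_sub_mul_ite_eq_setIntegral (.of_mem_Icc 0 1 hVm.aemeasurable (.of_forall hV))
      (.of_mem_Icc 0 1 hMm.aemeasurable (.of_forall hM)) hMm hVM hfm hf0
      (map_eq_withDensity_of_cdf hMm hf0 hfint hcdf)
  rw [hφ, hφ, intervalIntegral.integral_Iic_sub_Iic hgint.integrableOn hgint.integrableOn]
  exact integral_sub_mul_mem_Icc hfint.intervalIntegrable fun u hu =>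
    hbd u (uIcc_subset_Icc hb (integral_mem_Icc_of_forall_mem_Icc hVm hV) hu)

theorem ProbabilityTheory.IndepFun.integral_comp_eq_integral_integral [IsFiniteMeasure μ]
    {α β : Type*} [MeasurableSpace α] [MeasurableSpace β] {X : Ω → α} {Y : Ω → β}
    (hXY : IndepFun X Y μ) (hX : Measurable X) (hY : Measurable Y) {h : α × β → ℝ}
    (hh : StronglyMeasurable h) (hint : Integrable (fun ω => h (X ω, Y ω)) μ) :
    Integrable (fun ω => ∫ ω', h (X ω, Y ω') ∂μ) μ ∧
      ∫ ω, h (X ω, Y ω) ∂μ = ∫ ω, ∫ ω', h (X ω, Y ω') ∂μ ∂μ := by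
  have hmap : μ.map (fun ω => (X ω, Y ω)) = (μ.map X).prod (μ.map Y) :=
    (indepFun_iff_map_prod_eq_prod_map_map hX.aemeasurable hY.aemeasurable).1 hXY
  have hprod : Integrable h ((μ.map X).prod (μ.map Y)) := by
    rwa [← hmap, integrable_map_measure hh.aestronglyMeasurable (hX.prodMk hY).aemeasurable]
  have hinner : ∀ x, ∫ y, h (x, y) ∂(μ.map Y) = ∫ ω', h (x, Y ω') ∂μ := fun x =>
    integral_map hY.aemeasurable (hh.comp_measurable measurable_prodMk_left).aestronglyMeasurable
  have hleft : Integrable (fun x => ∫ ω', h (x, Y ω') ∂μ) (μ.map X) := by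
    simpa only [hinner] using hprod.integral_prod_left
  refine ⟨(integrable_map_measure hleft.aestronglyMeasurable hX.aemeasurable).1 hleft, ?_⟩
  calc ∫ ω, h (X ω, Y ω) ∂μ = ∫ p, h p ∂(μ.map fun ω => (X ω, Y ω)) :=
        (integral_map (hX.prodMk hY).aemeasurable hh.aestronglyMeasurable).symm
    _ = ∫ x, ∫ y, h (x, y) ∂(μ.map Y) ∂(μ.map X) := by rw [hmap, integral_prod h hprod]
    _ = ∫ x, ∫ ω', h (x, Y ω') ∂μ ∂(μ.map X) := by simp only [hinner]
    _ = ∫ ω, ∫ ω', h (X ω, Y ω') ∂μ ∂μ := integral_map hX.aemeasurable hleft.aestronglyMeasurable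

theorem sub_integral_comp_mem_Icc [IsProbabilityMeasure μ] {φ : ℝ → ℝ} {s : Set ℝ}
    {lo hi v : ℝ} {B : Ω → ℝ} (hB : ∀ ω, B ω ∈ s)
    (hφ : ∀ b ∈ s, φ v - φ b ∈ Icc (lo / 2 * (b - v) ^ 2) (hi / 2 * (b - v) ^ 2))
    (hφB : Integrable (fun ω => φ (B ω)) μ) (hsq : Integrable (fun ω => (B ω - v) ^ 2) μ) :
    φ v - ∫ ω, φ (B ω) ∂μ
      ∈ Icc (lo / 2 * ∫ ω, (B ω - v) ^ 2 ∂μ) (hi / 2 * ∫ ω, (B ω - v) ^ 2 ∂μ) := by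
  have hdiff : φ v - ∫ ω, φ (B ω) ∂μ = ∫ ω, (φ v - φ (B ω)) ∂μ := by
    rw [integral_sub (integrable_const _) hφB, integral_const, probReal_univ, one_smul]
  rw [hdiff, ← integral_const_mul, ← integral_const_mul]
  exact ⟨integral_mono (hsq.const_mul _) ((integrable_const _).sub hφB) fun ω => (hφ _ (hB ω)).1,
    integral_mono ((integrable_const _).sub hφB) (hsq.const_mul _) fun ω => (hφ _ (hB ω)).2⟩

theorem sub_integral_utility_mem_Icc_of_indepFun [IsProbabilityMeasure μ] {X Y B : Ω → ℝ}
    (hX : Integrable X μ) (hY : Integrable Y μ) (hXm : Measurable X) (hYm : Measurable Y)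
    (hBm : Measurable B) (hind : IndepFun B (fun ω => (X ω, Y ω)) μ) {φ : ℝ → ℝ}
    (hφ : ∀ b, φ b = ∫ ω, (X ω - Y ω) * (if Y ω ≤ b then 1 else 0) ∂μ)
    {s : Set ℝ} {lo hi v : ℝ} (hBs : ∀ ω, B ω ∈ s)
    (hreg : ∀ b ∈ s, φ v - φ b ∈ Icc (lo / 2 * (b - v) ^ 2) (hi / 2 * (b - v) ^ 2))
    (hsq : Integrable (fun ω => (B ω - v) ^ 2) μ) :
    φ v - ∫ ω, (X ω - Y ω) * (if Y ω ≤ B ω then 1 else 0) ∂μ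
      ∈ Icc (lo / 2 * ∫ ω, (B ω - v) ^ 2 ∂μ) (hi / 2 * ∫ ω, (B ω - v) ^ 2 ∂μ) := by
  set u : ℝ × ℝ × ℝ → ℝ := fun q => (q.2.1 - q.2.2) * if q.2.2 ≤ q.1 then 1 else 0
  have hu : Measurable u := (measurable_snd.fst.sub measurable_snd.snd).mul
    (measurable_const.ite (measurableSet_le measurable_snd.snd measurable_fst) measurable_const)
  have hite_le : ∀ᵐ ω ∂μ, ‖(if Y ω ≤ B ω then (1:ℝ) else 0)‖ ≤ 1 := .of_forall fun ω => by
    split_ifs <;> simp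
  obtain ⟨hint, heq⟩ := hind.integral_comp_eq_integral_integral hBm (hXm.prodMk hYm)
    hu.stronglyMeasurable ((hX.sub hY).mul_bdd
      (measurable_const.ite (measurableSet_le hYm hBm) measurable_const).aestronglyMeasurable
      hite_le)
  simp only [u, ← hφ] at hint heq
  rw [heq]
  exact sub_integral_comp_mem_Icc hBs hreg hint hsq

end

theorem stmt1_general
    {Ω : Type*} [MeasurableSpace Ω] (μ : Measure Ω) [IsProbabilityMeasure μ]
    (V M B : ℕ → Ω → ℝ) (v : ℝ) (F f : ℝ → ℝ) (βlow βup : ℝ)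
    (hβlow : 0 < βlow)
    (hVmeas : ∀ t, Measurable (V t)) (hMmeas : ∀ t, Measurable (M t))
    (hBmeas : ∀ t, Measurable (B t))
    (hVrange : ∀ t ω, V t ω ∈ Icc (0:ℝ) 1)
    (hMrange : ∀ t ω, M t ω ∈ Icc (0:ℝ) 1)
    (hBrange : ∀ t ω, B t ω ∈ Icc (0:ℝ) 1)
    (hVmean : ∀ t, ∫ ω, V t ω ∂μ = v)
    (hVM : ∀ t, IndepFun (V t) (M t) μ)
    -- the bid B_t depends only on past observations, hence is independent of (V_t, M_t)
    (hadapted : ∀ t, IndepFun (B t) (fun ω => (V t ω, M t ω)) μ)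
    -- F is the cumulative distribution function of the maximal opponent bids
    (hF : ∀ t x, (μ {ω | M t ω ≤ x}).toReal = F x)
    -- F admits a density f with β̲ ≤ f ≤ β on [0,1]
    (hfmeas : Measurable f)
    (hdens : ∀ x, F x = ∫ u in Iic x, f u)
    (hfbounds : ∀ x ∈ Icc (0:ℝ) 1, βlow ≤ f x ∧ f x ≤ βup)
    (hfsupp : ∀ x, x ∉ Icc (0:ℝ) 1 → f x = 0)
    -- expected utility of a fixed bid b at round t
    (EU : ℕ → ℝ → ℝ)
    (hEU : ∀ t b, EU t b
        = ∫ ω, (V t ω - M t ω) * (if M t ω ≤ b then (1:ℝ) else 0) ∂μ)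
    -- expected cumulative regret
    (RT : ℕ → ℝ)
    (hRT : ∀ T, RT T
        = sSup ((fun b => ∑ t ∈ Finset.Icc 1 T, EU t b) '' Icc (0:ℝ) 1)
          - ∑ t ∈ Finset.Icc 1 T,
              ∫ ω, (V t ω - M t ω) * (if M t ω ≤ B t ω then (1:ℝ) else 0) ∂μ) :
    (∀ t, ∀ b ∈ Icc (0:ℝ) 1,
      βlow / 2 * (b - v) ^ 2 ≤ EU t v - EU t b ∧
      EU t v - EU t b ≤ βup / 2 * (b - v) ^ 2) ∧
    (∀ T : ℕ,
      βlow / 2 * ∑ t ∈ Finset.Icc 1 T, ∫ ω, (B t ω - v) ^ 2 ∂μ ≤ RT T ∧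
      RT T ≤ βup / 2 * ∑ t ∈ Finset.Icc 1 T, ∫ ω, (B t ω - v) ^ 2 ∂μ) := by
  have hv : v ∈ Icc (0:ℝ) 1 := hVmean 0 ▸ integral_mem_Icc_of_forall_mem_Icc (hVmeas 0) (hVrange 0)
  have hinst : ∀ t, ∀ b ∈ Icc (0:ℝ) 1,
      EU t v - EU t b ∈ Icc (βlow / 2 * (b - v) ^ 2) (βup / 2 * (b - v) ^ 2) := fun t b hb => by
    rw [hEU, hEU, ← hVmean t]
    exact integral_utility_sub_mem_Icc (hVmeas t) (hMmeas t) (hVrange t) (hMrange t) (hVM t) hfmeas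
      hβlow.le hfbounds hfsupp (fun x => by rw [measureReal_def, hF, hdens]) hb
  have hround : ∀ t, EU t v - ∫ ω, (V t ω - M t ω) * (if M t ω ≤ B t ω then (1:ℝ) else 0) ∂μ
      ∈ Icc (βlow / 2 * ∫ ω, (B t ω - v) ^ 2 ∂μ) (βup / 2 * ∫ ω, (B t ω - v) ^ 2 ∂μ) := fun t =>
    sub_integral_utility_mem_Icc_of_indepFun
      (.of_mem_Icc 0 1 (hVmeas t).aemeasurable (.of_forall (hVrange t)))
      (.of_mem_Icc 0 1 (hMmeas t).aemeasurable (.of_forall (hMrange t))) (hVmeas t) (hMmeas t)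
      (hBmeas t) (hadapted t) (hEU t) (hBrange t) (hinst t)
      (.of_mem_Icc 0 1 (by fun_prop) (.of_forall fun ω => ⟨sq_nonneg _, by
        nlinarith [(hBrange t ω).1, (hBrange t ω).2, hv.1, hv.2]⟩))
  refine ⟨hinst, fun T => ?_⟩
  have hsup : sSup ((fun b => ∑ t ∈ Finset.Icc 1 T, EU t b) '' Icc (0:ℝ) 1)
      = ∑ t ∈ Finset.Icc 1 T, EU t v :=
    IsGreatest.csSup_eq ⟨mem_image_of_mem _ hv, forall_mem_image.2 fun b hb =>
      Finset.sum_le_sum fun t _ => sub_nonneg.1 (le_trans (by positivity) (hinst t b hb).1)⟩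
  rw [hRT, hsup, ← Finset.sum_sub_distrib, Finset.mul_sum, Finset.mul_sum]
  exact ⟨Finset.sum_le_sum fun t _ => (hround t).1, Finset.sum_le_sum fun t _ => (hround t).2⟩

/-- If `F` admits a density `f` with `β̲ ≤ f(x) ≤ β` on `[0,1]` (`β̲, β > 0`), then the
instantaneous expected regret `r(b) = E[U_t(v)] − E[U_t(b)]` of any bid `b ∈ [0,1]`
satisfies `(β̲/2)(b − v)² ≤ r(b) ≤ (β/2)(b − v)²`, and consequently, for any sequence of
bids `(B_t)`, `(β̲/2) Σ_{t=1}^T E[(B_t − v)²] ≤ R_T ≤ (β/2) Σ_{t=1}^T E[(B_t − v)²]`. -/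
theorem stmt1
    {Ω : Type*} [MeasurableSpace Ω] (μ : Measure Ω) [IsProbabilityMeasure μ]
    (V M B : ℕ → Ω → ℝ) (v : ℝ) (F f : ℝ → ℝ) (βlow βup : ℝ)
    (hβlow : 0 < βlow) (hβup : 0 < βup)
    (hVmeas : ∀ t, Measurable (V t)) (hMmeas : ∀ t, Measurable (M t))
    (hBmeas : ∀ t, Measurable (B t))
    (hVrange : ∀ t ω, V t ω ∈ Icc (0:ℝ) 1)
    (hMrange : ∀ t ω, M t ω ∈ Icc (0:ℝ) 1)
    (hBrange : ∀ t ω, B t ω ∈ Icc (0:ℝ) 1)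
    (hVmean : ∀ t, ∫ ω, V t ω ∂μ = v)
    (hiid : ∀ s t, Measure.map (fun ω => (V s ω, M s ω)) μ
        = Measure.map (fun ω => (V t ω, M t ω)) μ)
    (hpairindep : iIndepFun (fun t ω => (V t ω, M t ω)) μ)
    (hVM : ∀ t, IndepFun (V t) (M t) μ)
    -- the bid B_t depends only on past observations, hence is independent of (V_t, M_t)
    (hadapted : ∀ t, IndepFun (B t) (fun ω => (V t ω, M t ω)) μ)
    -- F is the cumulative distribution function of the maximal opponent bids
    (hF : ∀ t x, (μ {ω | M t ω ≤ x}).toReal = F x)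
    -- F admits a density f with β̲ ≤ f ≤ β on [0,1]
    (hfmeas : Measurable f)
    (hdens : ∀ x, F x = ∫ u in Iic x, f u)
    (hfbounds : ∀ x ∈ Icc (0:ℝ) 1, βlow ≤ f x ∧ f x ≤ βup)
    (hfsupp : ∀ x, x ∉ Icc (0:ℝ) 1 → f x = 0)
    -- expected utility of a fixed bid b at round t
    (EU : ℕ → ℝ → ℝ)
    (hEU : ∀ t b, EU t b
        = ∫ ω, (V t ω - M t ω) * (if M t ω ≤ b then (1:ℝ) else 0) ∂μ)
    -- expected cumulative regret
    (RT : ℕ → ℝ)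
    (hRT : ∀ T, RT T
        = sSup ((fun b => ∑ t ∈ Finset.Icc 1 T, EU t b) '' Icc (0:ℝ) 1)
          - ∑ t ∈ Finset.Icc 1 T,
              ∫ ω, (V t ω - M t ω) * (if M t ω ≤ B t ω then (1:ℝ) else 0) ∂μ) :
    (∀ t, ∀ b ∈ Icc (0:ℝ) 1,
      βlow / 2 * (b - v) ^ 2 ≤ EU t v - EU t b ∧
      EU t v - EU t b ≤ βup / 2 * (b - v) ^ 2) ∧
    (∀ T : ℕ,
      βlow / 2 * ∑ t ∈ Finset.Icc 1 T, ∫ ω, (B t ω - v) ^ 2 ∂μ ≤ RT T ∧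
      RT T ≤ βup / 2 * ∑ t ∈ Finset.Icc 1 T, ∫ ω, (B t ω - v) ^ 2 ∂μ) :=
  stmt1_general μ V M B v F f βlow βup hβlow hVmeas hMmeas hBmeas hVrange hMrange hBrange hVmean hVM
    hadapted hF hfmeas hdens hfbounds hfsupp EU hEU RT hRT
end

section
/- For all p ∈ [0,1] and q ∈ (0,1], the Kullback–Leibler divergence between Bernoulli distributions satisfies kl(p,q) ≥ (p − q)² / (2 x̃(1 − x̃)) ≥ (p − q)² / (2 x̃), where x̃ = (p + 2q)/3. -/
open scoped ENNReal

/-- Kullback–Leibler divergence between Bernoulli distributions of means `p` and `q`,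
with the conventions `0 · log 0 = 0` and `kl(p,q) = +∞` when `q ∈ {0,1}` and `p ≠ q`. -/
noncomputable def klBer (p q : ℝ) : ℝ≥0∞ :=
  if (q = 0 ∧ p ≠ 0) ∨ (q = 1 ∧ p ≠ 1) then ⊤
  else ENNReal.ofReal (p * Real.log (p / q) + (1 - p) * Real.log ((1 - p) / (1 - q)))

/-! With `φ(t) = p log t + (1 - p) log (1 - t)` one has `kl(p, q) = φ(p) - φ(q)
= ∫_q^p (p - t) / (t (1 - t)) dt`. The convex function `1 / (t (1 - t))` lies above its tangent
at `x̃`; integrated against the weight `p - t`, the linear part of the tangent drops out because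
`x̃ = (p + 2q)/3` is the barycentre of that weight on `[q, p]`, which leaves
`(p - q)² / (2 x̃ (1 - x̃))`. The second inequality is `1 - x̃ ≤ 1`. -/

open Real Set

lemma le_of_continuousOn_of_hasDerivAt_of_sign {f f' : ℝ → ℝ} {a b : ℝ}
    (hf : ContinuousOn f (uIcc a b))
    (hf' : ∀ t ∈ Ioo (min a b) (max a b), HasDerivAt f (f' t) t)
    (hsign : ∀ t ∈ Ioo (min a b) (max a b), 0 ≤ (b - t) * f' t) : f a ≤ f b := by
  rcases le_total a b with hab | hba
  · rw [uIcc_of_le hab] at hf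
    rw [min_eq_left hab, max_eq_right hab] at hf' hsign
    refine monotoneOn_of_hasDerivWithinAt_nonneg (f' := f') (convex_Icc a b) hf
      (fun t ht ↦ ?_) (fun t ht ↦ ?_) (left_mem_Icc.2 hab) (right_mem_Icc.2 hab) hab
    all_goals rw [interior_Icc] at ht
    · exact (hf' t ht).hasDerivWithinAt
    · exact nonneg_of_mul_nonneg_right (hsign t ht) (sub_pos.2 ht.2)
  · rw [uIcc_of_ge hba] at hf
    rw [min_eq_right hba, max_eq_left hba] at hf' hsign
    refine antitoneOn_of_hasDerivWithinAt_nonpos (f' := f') (convex_Icc b a) hf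
      (fun t ht ↦ ?_) (fun t ht ↦ ?_) (left_mem_Icc.2 hba) (right_mem_Icc.2 hba) hba
    all_goals rw [interior_Icc] at ht
    · exact (hf' t ht).hasDerivWithinAt
    · exact nonpos_of_mul_nonneg_right (hsign t ht) (sub_neg.2 ht.1)

lemma tangent_le_one_div_mul_one_sub {m t : ℝ} (hm0 : 0 < m) (hm1 : m < 1) (ht0 : 0 < t)
    (ht1 : t < 1) :
    1 / (m * (1 - m)) + (2 * m - 1) / (m * (1 - m)) ^ 2 * (t - m) ≤ 1 / (t * (1 - t)) := by
  have hm1' := sub_pos.2 hm1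
  have ht1' := sub_pos.2 ht1
  have := hm0.ne'; have := hm1'.ne'; have := ht0.ne'; have := ht1'.ne'
  have key : 1 / (t * (1 - t)) - (1 / (m * (1 - m)) + (2 * m - 1) / (m * (1 - m)) ^ 2 * (t - m))
      = (t - m) ^ 2 * ((1 - t) * (1 - m) ^ 2 + t * m ^ 2) / (t * (1 - t) * (m * (1 - m)) ^ 2) := by
    field_simp
    ring
  rw [← sub_nonneg, key]
  positivity

noncomputable def bernoulliLogLik (p t : ℝ) : ℝ := p * log t + (1 - p) * log (1 - t)

lemma hasDerivAt_bernoulliLogLik (p : ℝ) {t : ℝ} (ht0 : 0 < t) (ht1 : t < 1) :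
    HasDerivAt (bernoulliLogLik p) ((p - t) / (t * (1 - t))) t := by
  have h1t : 1 - t ≠ 0 := (sub_pos.2 ht1).ne'
  refine (((hasDerivAt_log ht0.ne').const_mul p).add
    ((((hasDerivAt_id' t).const_sub 1).log h1t).const_mul (1 - p))).congr_deriv ?_
  field_simp
  ring

lemma continuousOn_bernoulliLogLik {p q : ℝ} (hp : p ∈ Icc (0 : ℝ) 1) (hq : q ∈ Ioo (0 : ℝ) 1) :
    ContinuousOn (bernoulliLogLik p) (uIcc q p) := by
  have hlog : ContinuousOn (fun t ↦ p * log t) (uIcc q p) := by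
    rcases hp.1.eq_or_lt with rfl | hp0
    · simpa using continuousOn_const
    · exact continuousOn_const.mul
        (continuousOn_id.log fun t ht ↦ (lt_of_lt_of_le (lt_min hq.1 hp0) ht.1).ne')
  have hlog_one_sub : ContinuousOn (fun t ↦ (1 - p) * log (1 - t)) (uIcc q p) := by
    rcases hp.2.eq_or_lt with rfl | hp1
    · simpa using continuousOn_const
    · exact continuousOn_const.mul ((continuousOn_const.sub continuousOn_id).log
        fun t ht ↦ (sub_pos.2 (lt_of_le_of_lt ht.2 (max_lt hq.2 hp1))).ne')
  exact hlog.add hlog_one_sub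

lemma mul_log_div_eq_sub (a : ℝ) {b : ℝ} (hb : b ≠ 0) : a * log (a / b) = a * log a - a * log b := by
  rcases eq_or_ne a 0 with rfl | ha
  · simp
  · rw [log_div ha hb, mul_sub]

lemma bernoulliLogLik_sub_eq {p q : ℝ} (hq : q ∈ Ioo (0 : ℝ) 1) :
    bernoulliLogLik p p - bernoulliLogLik p q
      = p * log (p / q) + (1 - p) * log ((1 - p) / (1 - q)) := by
  rw [mul_log_div_eq_sub _ hq.1.ne', mul_log_div_eq_sub _ (sub_pos.2 hq.2).ne', bernoulliLogLik,
    bernoulliLogLik]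
  ring

lemma mul_sq_div_two_le_bernoulliLogLik_sub {p q a b : ℝ} (hp : p ∈ Icc (0 : ℝ) 1)
    (hq : q ∈ Ioo (0 : ℝ) 1)
    (hab : ∀ t ∈ Ioo (0 : ℝ) 1, a + b * (t - (p + 2 * q) / 3) ≤ 1 / (t * (1 - t))) :
    a * (p - q) ^ 2 / 2 ≤ bernoulliLogLik p p - bernoulliLogLik p q := by
  -- the added cubic is the antiderivative of `-(p - t) (a + b (t - x̃))` vanishing at `p`
  set h : ℝ → ℝ := fun t ↦ bernoulliLogLik p t + (t - p) ^ 2 / 2 * (a + 2 * b * (t - q) / 3)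
  have hq_le_hp : h q ≤ h p := by
    refine le_of_continuousOn_of_hasDerivAt_of_sign
      (f' := fun t ↦ (p - t) / (t * (1 - t)) - (p - t) * (a + b * (t - (p + 2 * q) / 3)))
      ((continuousOn_bernoulliLogLik hp hq).add (by fun_prop)) (fun t ht ↦ ?_) (fun t ht ↦ ?_)
    all_goals
      have ht0 : 0 < t := lt_of_le_of_lt (le_min hq.1.le hp.1) ht.1
      have ht1 : t < 1 := lt_of_lt_of_le ht.2 (max_le hq.2.le hp.2)
    · have hpoly : HasDerivAt (fun t ↦ (t - p) ^ 2 / 2 * (a + 2 * b * (t - q) / 3))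
          (-((p - t) * (a + b * (t - (p + 2 * q) / 3)))) t := by
        refine (((((hasDerivAt_id' t).sub_const p).pow 2).div_const 2).mul
          ((((hasDerivAt_id' t).sub_const q).const_mul (2 * b)).div_const 3 |>.const_add a))
          |>.congr_deriv ?_
        simp only [Pi.pow_apply]
        ring
      exact (hasDerivAt_bernoulliLogLik p ht0 ht1).add hpoly
    · have key : (p - t) * ((p - t) / (t * (1 - t)) - (p - t) * (a + b * (t - (p + 2 * q) / 3)))
          = (p - t) ^ 2 * (1 / (t * (1 - t)) - (a + b * (t - (p + 2 * q) / 3))) := by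
        field_simp
      rw [key]
      exact mul_nonneg (sq_nonneg _) (sub_nonneg.2 (hab t ⟨ht0, ht1⟩))
  simp only [h, sub_self] at hq_le_hp
  linarith

lemma sq_div_le_bernoulli_kl {p q : ℝ} (hp : p ∈ Icc (0 : ℝ) 1) (hq : q ∈ Ioo (0 : ℝ) 1) :
    (p - q) ^ 2 / (2 * ((p + 2 * q) / 3) * (1 - (p + 2 * q) / 3))
      ≤ p * log (p / q) + (1 - p) * log ((1 - p) / (1 - q)) := by
  set m := (p + 2 * q) / 3 with hm
  have hm0 : 0 < m := by linarith [hp.1, hq.1]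
  have hm1 : m < 1 := by linarith [hp.2, hq.2]
  have := hm0.ne'; have := (sub_pos.2 hm1).ne'
  rw [← bernoulliLogLik_sub_eq hq]
  calc (p - q) ^ 2 / (2 * m * (1 - m)) = 1 / (m * (1 - m)) * (p - q) ^ 2 / 2 := by field_simp
    _ ≤ _ := mul_sq_div_two_le_bernoulliLogLik_sub hp hq
      fun t ht ↦ tangent_le_one_div_mul_one_sub hm0 hm1 ht.1 ht.2

lemma ofReal_le_klBer {p q : ℝ} (hp : p ∈ Icc (0 : ℝ) 1) (hq : q ∈ Ioc (0 : ℝ) 1) :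
    ENNReal.ofReal ((p - q) ^ 2 / (2 * ((p + 2 * q) / 3) * (1 - (p + 2 * q) / 3))) ≤ klBer p q := by
  rcases hq.2.lt_or_eq with hq1 | rfl
  · rw [klBer, if_neg (by rintro (⟨h, -⟩ | ⟨h, -⟩) <;> linarith [hq.1])]
    exact ENNReal.ofReal_le_ofReal (sq_div_le_bernoulli_kl hp ⟨hq.1, hq1⟩)
  · rcases eq_or_ne p 1 with rfl | hp1
    · norm_num
    · simp [klBer, hp1]

/-- For all `p ∈ [0,1]` and `q ∈ (0,1]`,
`kl(p,q) ≥ (p − q)² / (2 x̃(1 − x̃)) ≥ (p − q)² / (2 x̃)` where `x̃ = (p + 2q)/3`. -/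
theorem stmt2 (p q : ℝ) (hp : p ∈ Set.Icc (0:ℝ) 1) (hq : q ∈ Set.Ioc (0:ℝ) 1) :
    ENNReal.ofReal ((p - q) ^ 2 / (2 * ((p + 2 * q) / 3) * (1 - (p + 2 * q) / 3)))
      ≤ klBer p q ∧
    (p - q) ^ 2 / (2 * ((p + 2 * q) / 3))
      ≤ (p - q) ^ 2 / (2 * ((p + 2 * q) / 3) * (1 - (p + 2 * q) / 3)) := by
  refine ⟨ofReal_le_klBer hp hq, ?_⟩
  obtain ⟨hp0, hp1⟩ := hp
  obtain ⟨hq0, hq1⟩ := hq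
  set m := (p + 2 * q) / 3 with hm
  rcases (show m ≤ 1 by linarith).lt_or_eq with hm1 | hm1
  · have hm0 : 0 < m := by linarith
    have := sub_pos.2 hm1
    exact div_le_div_of_nonneg_left (sq_nonneg _) (by positivity) (by nlinarith)
  · have : p = q := by linarith
    simp [this]
end

section
/- For any v ∈ [0,1] and any α ∈ (−1, 1/v − 1), the Bernoulli Kullback–Leibler divergence satisfies kl((1+α)v, v) ≥ α²v / (2(1 + α/3)). -/
open scoped ENNReal

/-!
Writing `klFun t = t log t + 1 - t`, the Bernoulli divergence is the `klFun`-divergence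
`kl(p, q) = q klFun (p/q) + (1 - q) klFun ((1 - p)/(1 - q))`, and dropping the second term leaves
`kl((1+α)v, v) ≥ v klFun (1 + α)`. The Bernstein-type bound `klFun t ≥ 3(t-1)² / (2(t+2))`
follows by differentiating twice: `g = 2(t+2) klFun t - 3(t-1)²` has `g' = 4 h` with
`h = (t+1) log t - 2(t-1)`, and `h' = log t + 1/t - 1 ≥ 0`, so `h` and then `g'` have the sign
of `t - 1`, whence `g` is minimal at `t = 1`, where it vanishes.
-/

open Real Set InformationTheory

lemma MonotoneOn.sub_mul_sub_nonneg {f : ℝ → ℝ} {D : Set ℝ} (hf : MonotoneOn f D)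
    {c x : ℝ} (hc : c ∈ D) (hx : x ∈ D) : 0 ≤ (x - c) * (f x - f c) := by
  rcases le_total c x with hcx | hxc
  · exact mul_nonneg (sub_nonneg.2 hcx) (sub_nonneg.2 (hf hc hx hcx))
  · exact mul_nonneg_of_nonpos_of_nonpos (sub_nonpos.2 hxc) (sub_nonpos.2 (hf hx hc hxc))

lemma isMinOn_of_hasDerivAt_of_sub_mul_nonneg {f f' : ℝ → ℝ} {D : Set ℝ} {c : ℝ}
    (hD : D.OrdConnected) (hc : c ∈ D) (hf : ∀ x ∈ D, HasDerivAt f (f' x) x)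
    (hf' : ∀ x ∈ D, 0 ≤ (x - c) * f' x) : IsMinOn f D c := by
  intro x hx
  have hcont : ∀ {a b}, a ∈ D → b ∈ D → ContinuousOn f (Icc a b) := fun ha hb y hy ↦
    (hf y (hD.out ha hb hy)).continuousAt.continuousWithinAt
  have hderiv : ∀ {a b}, a ∈ D → b ∈ D →
      ∀ y ∈ interior (Icc a b), HasDerivWithinAt f (f' y) (interior (Icc a b)) y :=
    fun ha hb y hy ↦ (hf y (hD.out ha hb (interior_subset hy))).hasDerivWithinAt
  rcases le_total c x with hcx | hxc
  · refine monotoneOn_of_hasDerivWithinAt_nonneg (convex_Icc c x) (hcont hc hx) (hderiv hc hx)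
      (fun y hy ↦ ?_) (left_mem_Icc.2 hcx) (right_mem_Icc.2 hcx) hcx
    rw [interior_Icc] at hy
    exact nonneg_of_mul_nonneg_right (hf' y (hD.out hc hx (Ioo_subset_Icc_self hy)))
      (sub_pos.2 hy.1)
  · refine antitoneOn_of_hasDerivWithinAt_nonpos (convex_Icc x c) (hcont hx hc) (hderiv hx hc)
      (fun y hy ↦ ?_) (left_mem_Icc.2 hxc) (right_mem_Icc.2 hxc) hxc
    rw [interior_Icc] at hy
    exact nonpos_of_mul_nonneg_right (hf' y (hD.out hx hc (Ioo_subset_Icc_self hy)))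
      (sub_neg.2 hy.2)

lemma monotoneOn_add_one_mul_log_sub :
    MonotoneOn (fun t ↦ (t + 1) * log t - 2 * (t - 1)) (Ioi 0) := by
  have hderiv : ∀ t ∈ Ioi (0 : ℝ),
      HasDerivAt (fun t ↦ (t + 1) * log t - 2 * (t - 1)) (log t + t⁻¹ - 1) t := by
    intro t (ht : 0 < t)
    have := (((hasDerivAt_id' t).add_const 1).mul (hasDerivAt_log ht.ne')).sub
      (((hasDerivAt_id' t).sub_const 1).const_mul 2)
    refine this.congr_deriv ?_
    field_simp
    ring
  refine monotoneOn_of_hasDerivWithinAt_nonneg (convex_Ioi 0)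
    (fun t ht ↦ (hderiv t ht).continuousAt.continuousWithinAt)
    (fun t ht ↦ (hderiv t (interior_subset ht)).hasDerivWithinAt) (fun t ht ↦ ?_)
  rw [interior_Ioi] at ht
  linarith [one_sub_inv_le_log_of_pos (mem_Ioi.1 ht)]

lemma sq_sub_one_div_le_klFun {t : ℝ} (ht : 0 < t) :
    3 * (t - 1) ^ 2 / (2 * (t + 2)) ≤ klFun t := by
  set h : ℝ → ℝ := fun t ↦ (t + 1) * log t - 2 * (t - 1)
  have hmin : IsMinOn (fun t ↦ 2 * (t + 2) * klFun t - 3 * (t - 1) ^ 2) (Ioi 0) 1 := by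
    refine isMinOn_of_hasDerivAt_of_sub_mul_nonneg (f' := fun t ↦ 4 * h t) ordConnected_Ioi
      (mem_Ioi.2 one_pos) (fun x hx ↦ ?_) (fun x hx ↦ ?_)
    · have hx : 0 < x := hx
      have := ((((hasDerivAt_id x).add_const 2).const_mul 2).mul (hasDerivAt_klFun hx.ne')).sub
        (((hasDerivAt_id x).sub_const 1).pow 2 |>.const_mul 3)
      refine this.congr_deriv ?_
      simp only [h, klFun_apply, id]
      ring
    · have := monotoneOn_add_one_mul_log_sub.sub_mul_sub_nonneg (mem_Ioi.2 one_pos) hx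
      simp only [h, log_one] at this ⊢
      nlinarith
  have := mem_ofPred.1 (hmin ht)
  simp only [klFun_one] at this
  rw [div_le_iff₀ (by positivity)]
  linarith

lemma klBer_eq_ofReal_klFun (p : ℝ) {q : ℝ} (hq : q ∈ Ioo 0 1) :
    klBer p q = ENNReal.ofReal (q * klFun (p / q) + (1 - q) * klFun ((1 - p) / (1 - q))) := by
  obtain ⟨hq0, hq1⟩ := hq
  have hq1' : 1 - q ≠ 0 := (sub_pos.2 hq1).ne'
  rw [klBer, if_neg (by rintro (⟨rfl, -⟩ | ⟨rfl, -⟩) <;> simp_all), klFun_apply, klFun_apply]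
  congr 1
  field_simp
  ring

lemma ofReal_mul_klFun_div_le_klBer {p q : ℝ} (hp : p ≤ 1) (hq : q ∈ Ioo 0 1) :
    ENNReal.ofReal (q * klFun (p / q)) ≤ klBer p q := by
  rw [klBer_eq_ofReal_klFun p hq]
  have h1q : 0 < 1 - q := sub_pos.2 hq.2
  exact ENNReal.ofReal_le_ofReal <| le_add_of_nonneg_right <|
    mul_nonneg h1q.le (klFun_nonneg (div_nonneg (sub_nonneg.2 hp) h1q.le))

/-- For any `v ∈ [0,1]` and any `α ∈ (−1, 1/v − 1)`,
`kl((1+α)v, v) ≥ α²v / (2(1 + α/3))`. -/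
theorem stmt3 (v α : ℝ) (hv : v ∈ Set.Icc (0:ℝ) 1)
    (hα₁ : -1 < α) (hα₂ : α < 1 / v - 1) :
    ENNReal.ofReal (α ^ 2 * v / (2 * (1 + α / 3))) ≤ klBer ((1 + α) * v) v := by
  obtain ⟨hv0, hv1⟩ := hv
  obtain rfl | hv0 := hv0.eq_or_lt
  · norm_num at hα₂
    linarith
  obtain rfl | hv1 := hv1.eq_or_lt
  · rw [klBer, if_pos (Or.inr ⟨rfl, by norm_num at hα₂ ⊢; linarith⟩)]
    exact le_top
  have hp : (1 + α) * v < 1 := (lt_div_iff₀ hv0).1 (by linarith)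
  refine le_trans ?_ (ofReal_mul_klFun_div_le_klBer hp.le ⟨hv0, hv1⟩)
  rw [mul_div_cancel_right₀ _ hv0.ne']
  refine ENNReal.ofReal_le_ofReal ?_
  calc α ^ 2 * v / (2 * (1 + α / 3)) = v * (3 * (1 + α - 1) ^ 2 / (2 * (1 + α + 2))) := by
        field_simp
        ring
    _ ≤ v * klFun (1 + α) := by
        gcongr
        exact sq_sub_one_div_le_klFun (by linarith)
end

section
/- For every θ ∈ (0,1) and every ε > 0, there exists η = η_ε(θ) ∈ (0,1) such that for all θ̂, u ∈ [θ − η, θ + η] ∩ [0,1], the Bernoulli Kullback–Leibler divergence satisfies kl(θ̂, u) ≥ (u − θ̂)² / (2θ(1 − θ)(1 + ε)). -/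
open scoped ENNReal

/-!
For fixed `p`, `u ↦ kl(p, u)` vanishes at `u = p` with derivative `(u - p) / (u (1 - u))`,
while `u ↦ (u - p)² / (2M)` has derivative `(u - p) / M`. So if `t (1 - t) ≤ M` for all `t`
between `p` and `u`, comparing derivatives gives `kl(p, u) ≥ (u - p)² / (2M)`; the case `u < p`
reduces to `p < u` through `kl(p, u) = kl(1 - p, 1 - u)`. Near `θ` the variance `t (1 - t)` is
at most `θ (1 - θ) + |t - θ|`, so `M = θ (1 - θ) (1 + ε)` works on a window of radius
at most `ε θ (1 - θ)`.
-/

open Real Set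

noncomputable def klBerReal (p q : ℝ) : ℝ :=
  p * log (p / q) + (1 - p) * log ((1 - p) / (1 - q))

lemma klBer_eq_ofReal {p q : ℝ} (hq : q ∈ Ioo 0 1) :
    klBer p q = ENNReal.ofReal (klBerReal p q) := by
  rw [klBer, if_neg, klBerReal]
  rintro (⟨rfl, -⟩ | ⟨rfl, -⟩) <;> simp at hq

lemma hasDerivAt_klBerReal {p t : ℝ} (hp : p ∈ Ioo 0 1) (ht : t ∈ Ioo 0 1) :
    HasDerivAt (klBerReal p) ((t - p) / (t * (1 - t))) t := by
  obtain ⟨hp0, hp1⟩ := hp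
  obtain ⟨ht0, ht1⟩ := ht
  have ht' : 1 - t ≠ 0 := by linarith
  have hp' : 1 - p ≠ 0 := by linarith
  have hlog₁ := ((hasDerivAt_const t p).fun_div (hasDerivAt_id' t) ht0.ne').log
    (div_ne_zero hp0.ne' ht0.ne')
  have hlog₂ := ((hasDerivAt_const t (1 - p)).fun_div ((hasDerivAt_id' t).const_sub 1) ht').log
    (div_ne_zero hp' ht')
  refine ((hlog₁.const_mul p).fun_add (hlog₂.const_mul (1 - p))).congr_deriv ?_
  field_simp
  ring

lemma klBerReal_self (p : ℝ) : klBerReal p p = 0 := by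
  simp [klBerReal]

lemma klBerReal_one_sub (p q : ℝ) : klBerReal (1 - p) (1 - q) = klBerReal p q := by
  simp only [klBerReal, sub_sub_cancel]
  ring

lemma sq_div_le_klBerReal_of_le {p u M : ℝ} (hp : 0 < p) (hpu : p ≤ u) (hu : u < 1)
    (hM : ∀ t ∈ Icc p u, t * (1 - t) ≤ M) :
    (u - p) ^ 2 / (2 * M) ≤ klBerReal p u := by
  have hIoo : Icc p u ⊆ Ioo 0 1 := fun t ht => ⟨hp.trans_le ht.1, ht.2.trans_lt hu⟩
  have hp₁ : p ∈ Ioo 0 1 := hIoo (left_mem_Icc.2 hpu)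
  have hgap : ∀ t ∈ Icc p u, HasDerivAt (fun s => klBerReal p s - (s - p) ^ 2 / (2 * M))
      ((t - p) / (t * (1 - t)) - (t - p) / M) t := fun t ht =>
    (hasDerivAt_klBerReal hp₁ (hIoo ht)).sub
      ((((hasDerivAt_id' t).sub_const p).pow 2).div_const _ |>.congr_deriv (by field_simp; ring))
  have hmono := monotoneOn_of_hasDerivWithinAt_nonneg (convex_Icc p u)
    (fun t ht => (hgap t ht).continuousAt.continuousWithinAt)
    (fun t ht => (hgap t (interior_subset ht)).hasDerivWithinAt)
    (fun t ht => by
      rw [interior_Icc] at ht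
      have ht₁ := hIoo (Ioo_subset_Icc_self ht)
      have hvar : 0 < t * (1 - t) := mul_pos ht₁.1 (sub_pos.2 ht₁.2)
      exact sub_nonneg.2 (div_le_div_of_nonneg_left (sub_nonneg.2 ht.1.le) hvar
        (hM t (Ioo_subset_Icc_self ht))))
    (left_mem_Icc.2 hpu) (right_mem_Icc.2 hpu) hpu
  simpa [klBerReal_self] using hmono

lemma sq_div_le_klBerReal {p u M : ℝ} (hp : p ∈ Ioo 0 1) (hu : u ∈ Ioo 0 1)
    (hM : ∀ t ∈ uIcc p u, t * (1 - t) ≤ M) :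
    (u - p) ^ 2 / (2 * M) ≤ klBerReal p u := by
  rcases le_total p u with hpu | hup
  · exact sq_div_le_klBerReal_of_le hp.1 hpu hu.2 fun t ht => hM t (Icc_subset_uIcc ht)
  · rw [← klBerReal_one_sub]
    convert sq_div_le_klBerReal_of_le (u := 1 - u) (sub_pos.2 hp.2) (by linarith)
      (by linarith [hu.1]) fun t ht => ?_ using 2
    · ring
    · have := hM (1 - t) (Icc_subset_uIcc' ⟨by linarith [ht.2], by linarith [ht.1]⟩)
      linarith

lemma mul_one_sub_le_add_of_mem_Icc {θ η t : ℝ} (hθ : θ ∈ Icc 0 1)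
    (ht : t ∈ Icc (θ - η) (θ + η)) : t * (1 - t) ≤ θ * (1 - θ) + η := by
  obtain ⟨hθ0, hθ1⟩ := hθ
  obtain ⟨ht₁, ht₂⟩ := ht
  nlinarith [mul_nonneg (sub_nonneg.2 ht₂) (sub_nonneg.2 hθ1),
    mul_nonneg (sub_nonneg.2 ht₁) hθ0, sq_nonneg (t - θ)]

/-- For every `θ ∈ (0,1)` and `ε > 0` there is `η ∈ (0,1)` such that for all
`θ̂, u ∈ [θ − η, θ + η] ∩ [0,1]`, `kl(θ̂, u) ≥ (u − θ̂)² / (2θ(1 − θ)(1 + ε))`. -/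
theorem stmt4 (θ : ℝ) (hθ : θ ∈ Set.Ioo (0:ℝ) 1) (ε : ℝ) (hε : 0 < ε) :
    ∃ η ∈ Set.Ioo (0:ℝ) 1, ∀ θh u : ℝ,
      θh ∈ Set.Icc (θ - η) (θ + η) ∩ Set.Icc 0 1 →
      u ∈ Set.Icc (θ - η) (θ + η) ∩ Set.Icc 0 1 →
      ENNReal.ofReal ((u - θh) ^ 2 / (2 * θ * (1 - θ) * (1 + ε))) ≤ klBer θh u := by
  obtain ⟨hθ0, hθ1⟩ := hθ
  have hvar : 0 < θ * (1 - θ) := mul_pos hθ0 (sub_pos.2 hθ1)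
  set η := θ * (1 - θ) * min ε 1 / 2 with hη
  have hη0 : 0 < η := by positivity
  have hηvar : η ≤ θ * (1 - θ) / 2 := by
    have := mul_le_of_le_one_right hvar.le (min_le_right ε 1)
    linarith
  have hηε : η ≤ ε * (θ * (1 - θ)) := by
    have := mul_le_mul_of_nonneg_left (min_le_left ε 1) hvar.le
    nlinarith
  have hwindow : Icc (θ - η) (θ + η) ⊆ Ioo 0 1 := fun t ht =>
    ⟨by nlinarith [ht.1], by nlinarith [ht.2]⟩
  refine ⟨η, ⟨hη0, by nlinarith⟩, fun p u hp hu => ?_⟩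
  have hM : ∀ t ∈ uIcc p u, t * (1 - t) ≤ θ * (1 - θ) * (1 + ε) := fun t ht => by
    have := mul_one_sub_le_add_of_mem_Icc ⟨hθ0.le, hθ1.le⟩ (uIcc_subset_Icc hp.1 hu.1 ht)
    linarith
  rw [klBer_eq_ofReal (hwindow hu.1)]
  refine ENNReal.ofReal_le_ofReal ?_
  convert sq_div_le_klBerReal (hwindow hp.1) (hwindow hu.1) hM using 2
  ring
end

section
/- In the second-price auction model, the expected cumulative regret of any bidding strategy satisfies R_T ≤ Σ_{t=1}^T E[(M_t − v)·1{v ≤ M_t ≤ B_t}] + Σ_{t=1}^T P(B_t < v). -/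
open MeasureTheory ProbabilityTheory Set

/-!
Independence of `V_t` from `M_t`, and of the bid `B_t` from `(V_t, M_t)`, allows one to replace
the value `V_t` by its mean `v` in the expected utility of both a fixed bid `b` and the actual
bid `B_t` (for `B_t` by first integrating out `(V_t, M_t)` at a frozen bid). What is left is a
pointwise comparison: with value `v`, bidding `b` instead of `β` gains at most the overbidding
loss `(m - v)·1{v ≤ m ≤ β}`, or at most `1` when `β` underbids `v`.
-/

noncomputable def secondPriceUtility (x m b : ℝ) : ℝ := (x - m) * if m ≤ b then 1 else 0

lemma secondPriceUtility_sub_le {v m b β : ℝ} (h : v - m ≤ 1) :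
    secondPriceUtility v m b - secondPriceUtility v m β
      ≤ (m - v) * (if v ≤ m ∧ m ≤ β then 1 else 0) + if β < v then 1 else 0 := by
  unfold secondPriceUtility
  split_ifs <;> grind

lemma measurable_secondPriceUtility :
    Measurable fun p : ℝ × ℝ × ℝ => secondPriceUtility p.1 p.2.1 p.2.2 :=
  (measurable_fst.sub measurable_snd.fst).mul <|
    Measurable.ite (measurableSet_le measurable_snd.fst measurable_snd.snd) measurable_const
      measurable_const

section

variable {Ω : Type*} [MeasurableSpace Ω] {μ : Measure Ω}

lemma MeasureTheory.Integrable.mul_ite {f : Ω → ℝ} (hf : Integrable f μ) {p : Ω → Prop}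
    [DecidablePred p] (hp : MeasurableSet {ω | p ω}) :
    Integrable (fun ω => f ω * if p ω then 1 else 0) μ :=
  hf.mul_bdd (c := 1) (Measurable.ite hp measurable_const measurable_const).aestronglyMeasurable
    (ae_of_all _ fun ω => by split_ifs <;> simp)

lemma ProbabilityTheory.IndepFun.integral_comp_prodMk_eq_integral_integral [IsFiniteMeasure μ]
    {α β E : Type*} [MeasurableSpace α] [MeasurableSpace β]
    [NormedAddCommGroup E] [NormedSpace ℝ E] {X : Ω → α} {Y : Ω → β} (hXY : X ⟂ᵢ[μ] Y)
    (hX : Measurable X) (hY : Measurable Y) {f : α × β → E} (hf : StronglyMeasurable f)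
    (hfi : Integrable (fun ω => f (X ω, Y ω)) μ) :
    ∫ ω, f (X ω, Y ω) ∂μ = ∫ x, ∫ ω, f (x, Y ω) ∂μ ∂(μ.map X) := by
  have hXY' : Measurable fun ω => (X ω, Y ω) := hX.prodMk hY
  have hlaw : μ.map (fun ω => (X ω, Y ω)) = (μ.map X).prod (μ.map Y) :=
    (indepFun_iff_map_prod_eq_prod_map_map hX.aemeasurable hY.aemeasurable).1 hXY
  have hfi' : Integrable f ((μ.map X).prod (μ.map Y)) := by
    rw [← hlaw]
    exact (integrable_map_measure hf.aestronglyMeasurable hXY'.aemeasurable).2 hfi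
  rw [← integral_map hXY'.aemeasurable hf.aestronglyMeasurable, hlaw, integral_prod _ hfi']
  refine integral_congr_ae (ae_of_all _ fun x => ?_)
  exact integral_map hY.aemeasurable
    (hf.comp_measurable measurable_prodMk_left).aestronglyMeasurable

lemma integrable_secondPriceUtility {X M B : Ω → ℝ} (hX : Integrable X μ) (hM : Integrable M μ)
    (hMB : MeasurableSet {ω | M ω ≤ B ω}) :
    Integrable (fun ω => secondPriceUtility (X ω) (M ω) (B ω)) μ :=
  (hX.sub hM).mul_ite hMB

variable [IsProbabilityMeasure μ] {V M B : Ω → ℝ}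

lemma integral_secondPriceUtility_eq_of_indepFun (hVM : V ⟂ᵢ[μ] M) (hV : Integrable V μ)
    (hM : Measurable M) (hMi : Integrable M μ) (b : ℝ) :
    ∫ ω, secondPriceUtility (V ω) (M ω) b ∂μ
      = ∫ ω, secondPriceUtility (∫ ω, V ω ∂μ) (M ω) b ∂μ := by
  set v := ∫ ω, V ω ∂μ
  have hψ : Measurable fun m : ℝ => if m ≤ b then (1 : ℝ) else 0 :=
    Measurable.ite measurableSet_Iic measurable_const measurable_const
  have hwin : MeasurableSet {ω | M ω ≤ b} := measurableSet_le hM measurable_const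
  have hVv : Integrable (fun ω => V ω - v) μ := hV.sub (integrable_const v)
  have hcentered : ∫ ω, (V ω - v) * (if M ω ≤ b then 1 else 0) ∂μ = 0 := by
    have hind : (fun ω => V ω - v) ⟂ᵢ[μ] fun ω => if M ω ≤ b then (1 : ℝ) else 0 :=
      hVM.comp (measurable_id.sub_const v) hψ
    rw [hind.integral_fun_mul_eq_mul_integral hVv.aestronglyMeasurable
      (hψ.comp hM).aestronglyMeasurable, integral_sub hV (integrable_const v)]
    simp [v]
  calc ∫ ω, secondPriceUtility (V ω) (M ω) b ∂μ
      = ∫ ω, ((V ω - v) * (if M ω ≤ b then 1 else 0) + secondPriceUtility v (M ω) b) ∂μ := by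
        congr with ω
        unfold secondPriceUtility
        ring
    _ = ∫ ω, secondPriceUtility v (M ω) b ∂μ := by
        rw [integral_add (hVv.mul_ite hwin)
          (integrable_secondPriceUtility (integrable_const v) hMi hwin), hcentered, zero_add]

lemma integral_secondPriceUtility_eq_of_indepFun_bid (hVM : V ⟂ᵢ[μ] M)
    (hBVM : B ⟂ᵢ[μ] fun ω => (V ω, M ω)) (hV : Measurable V) (hVi : Integrable V μ)
    (hM : Measurable M) (hMi : Integrable M μ) (hB : Measurable B) :
    ∫ ω, secondPriceUtility (V ω) (M ω) (B ω) ∂μ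
      = ∫ ω, secondPriceUtility (∫ ω, V ω ∂μ) (M ω) (B ω) ∂μ := by
  have hwin : MeasurableSet {ω | M ω ≤ B ω} := measurableSet_le hM hB
  have hu : Measurable fun p : ℝ × ℝ × ℝ => secondPriceUtility p.2.1 p.2.2 p.1 :=
    measurable_secondPriceUtility.comp
      (measurable_snd.fst.prodMk (measurable_snd.snd.prodMk measurable_fst))
  have hu' : Measurable fun p : ℝ × ℝ × ℝ => secondPriceUtility (∫ ω, V ω ∂μ) p.2.2 p.1 :=
    measurable_secondPriceUtility.comp
      (measurable_const.prodMk (measurable_snd.snd.prodMk measurable_fst))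
  calc ∫ ω, secondPriceUtility (V ω) (M ω) (B ω) ∂μ
      = ∫ b, ∫ ω, secondPriceUtility (V ω) (M ω) b ∂μ ∂(μ.map B) :=
        hBVM.integral_comp_prodMk_eq_integral_integral hB (hV.prodMk hM) hu.stronglyMeasurable
          (integrable_secondPriceUtility hVi hMi hwin)
    _ = ∫ b, ∫ ω, secondPriceUtility (∫ ω, V ω ∂μ) (M ω) b ∂μ ∂(μ.map B) := by
        congr with b
        exact integral_secondPriceUtility_eq_of_indepFun hVM hVi hM hMi b
    _ = ∫ ω, secondPriceUtility (∫ ω, V ω ∂μ) (M ω) (B ω) ∂μ :=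
        (hBVM.integral_comp_prodMk_eq_integral_integral hB (hV.prodMk hM) hu'.stronglyMeasurable
          (integrable_secondPriceUtility (integrable_const _) hMi hwin)).symm

lemma integral_secondPriceUtility_sub_le (hVM : V ⟂ᵢ[μ] M)
    (hBVM : B ⟂ᵢ[μ] fun ω => (V ω, M ω)) (hV : Measurable V) (hM : Measurable M)
    (hB : Measurable B) (hVrange : ∀ ω, V ω ∈ Icc (0 : ℝ) 1) (hMrange : ∀ ω, M ω ∈ Icc (0 : ℝ) 1)
    {v : ℝ} (hVmean : ∫ ω, V ω ∂μ = v) (b : ℝ) :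
    ∫ ω, secondPriceUtility (V ω) (M ω) b ∂μ - ∫ ω, secondPriceUtility (V ω) (M ω) (B ω) ∂μ
      ≤ ∫ ω, (M ω - v) * (if v ≤ M ω ∧ M ω ≤ B ω then 1 else 0) ∂μ
        + (μ {ω | B ω < v}).toReal := by
  have hVi : Integrable V μ := .of_mem_Icc 0 1 hV.aemeasurable (ae_of_all _ hVrange)
  have hMi : Integrable M μ := .of_mem_Icc 0 1 hM.aemeasurable (ae_of_all _ hMrange)
  have hv : v ≤ 1 := by
    simpa [hVmean] using integral_mono hVi (integrable_const (1 : ℝ)) fun ω => (hVrange ω).2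
  have hwin_b : MeasurableSet {ω | M ω ≤ b} := measurableSet_le hM measurable_const
  have hwin_B : MeasurableSet {ω | M ω ≤ B ω} := measurableSet_le hM hB
  have hunder : MeasurableSet {ω | B ω < v} := measurableSet_lt hB measurable_const
  have hmid : Integrable (fun ω => (M ω - v) * if v ≤ M ω ∧ M ω ≤ B ω then 1 else 0) μ :=
    (hMi.sub (integrable_const v)).mul_ite ((measurableSet_le measurable_const hM).inter hwin_B)
  have hunderi : Integrable (fun ω => if B ω < v then (1 : ℝ) else 0) μ :=
    (integrable_const (1 : ℝ)).indicator hunder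
  calc _ = ∫ ω, (secondPriceUtility v (M ω) b - secondPriceUtility v (M ω) (B ω)) ∂μ := by
        rw [integral_secondPriceUtility_eq_of_indepFun hVM hVi hM hMi b,
          integral_secondPriceUtility_eq_of_indepFun_bid hVM hBVM hV hVi hM hMi hB, hVmean,
          integral_sub (integrable_secondPriceUtility (integrable_const v) hMi hwin_b)
            (integrable_secondPriceUtility (integrable_const v) hMi hwin_B)]
    _ ≤ ∫ ω, ((M ω - v) * (if v ≤ M ω ∧ M ω ≤ B ω then 1 else 0)
          + if B ω < v then 1 else 0) ∂μ :=
        integral_mono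
          ((integrable_secondPriceUtility (integrable_const v) hMi hwin_b).sub
            (integrable_secondPriceUtility (integrable_const v) hMi hwin_B))
          (hmid.add hunderi) fun ω => secondPriceUtility_sub_le (by linarith [(hMrange ω).1])
    _ = _ := by
        rw [integral_add hmid hunderi, ← measureReal_def, ← integral_indicator_one hunder]
        rfl

end

theorem stmt7_general
    {Ω : Type*} [MeasurableSpace Ω] (μ : Measure Ω) [IsProbabilityMeasure μ]
    (V M B : ℕ → Ω → ℝ) (v : ℝ) (T : ℕ)
    (hVmeas : ∀ t, Measurable (V t)) (hMmeas : ∀ t, Measurable (M t))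
    (hBmeas : ∀ t, Measurable (B t))
    (hVrange : ∀ t ω, V t ω ∈ Icc (0:ℝ) 1)
    (hMrange : ∀ t ω, M t ω ∈ Icc (0:ℝ) 1)
    (hVmean : ∀ t, ∫ ω, V t ω ∂μ = v)
    (hVM : ∀ t, IndepFun (V t) (M t) μ)
    -- the bid B_t depends only on past observations, hence is independent of (V_t, M_t)
    (hadapted : ∀ t, IndepFun (B t) (fun ω => (V t ω, M t ω)) μ) :
    sSup ((fun b => ∑ t ∈ Finset.Icc 1 T,
        ∫ ω, (V t ω - M t ω) * (if M t ω ≤ b then (1:ℝ) else 0) ∂μ) '' Icc (0:ℝ) 1)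
      - ∑ t ∈ Finset.Icc 1 T,
          ∫ ω, (V t ω - M t ω) * (if M t ω ≤ B t ω then (1:ℝ) else 0) ∂μ
    ≤ (∑ t ∈ Finset.Icc 1 T,
        ∫ ω, (M t ω - v) * (if v ≤ M t ω ∧ M t ω ≤ B t ω then (1:ℝ) else 0) ∂μ)
      + ∑ t ∈ Finset.Icc 1 T, (μ {ω | B t ω < v}).toReal := by
  rw [sub_le_iff_le_add]
  refine csSup_le ((nonempty_Icc.2 zero_le_one).image _) ?_
  rintro _ ⟨b, -, rfl⟩
  rw [← sub_le_iff_le_add, ← Finset.sum_sub_distrib, ← Finset.sum_add_distrib]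
  exact Finset.sum_le_sum fun t _ =>
    integral_secondPriceUtility_sub_le (hVM t) (hadapted t) (hVmeas t) (hMmeas t) (hBmeas t)
      (hVrange t) (hMrange t) (hVmean t) b

/-- In the second-price auction model, the expected cumulative regret of any bidding
strategy satisfies
`R_T ≤ Σ_{t=1}^T E[(M_t − v)·1{v ≤ M_t ≤ B_t}] + Σ_{t=1}^T P(B_t < v)`. -/
theorem stmt7
    {Ω : Type*} [MeasurableSpace Ω] (μ : Measure Ω) [IsProbabilityMeasure μ]
    (V M B : ℕ → Ω → ℝ) (v : ℝ) (T : ℕ)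
    (hVmeas : ∀ t, Measurable (V t)) (hMmeas : ∀ t, Measurable (M t))
    (hBmeas : ∀ t, Measurable (B t))
    (hVrange : ∀ t ω, V t ω ∈ Icc (0:ℝ) 1)
    (hMrange : ∀ t ω, M t ω ∈ Icc (0:ℝ) 1)
    (hBrange : ∀ t ω, B t ω ∈ Icc (0:ℝ) 1)
    (hVmean : ∀ t, ∫ ω, V t ω ∂μ = v)
    (hiid : ∀ s t, Measure.map (fun ω => (V s ω, M s ω)) μ
        = Measure.map (fun ω => (V t ω, M t ω)) μ)
    (hpairindep : iIndepFun (fun t ω => (V t ω, M t ω)) μ)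
    (hVM : ∀ t, IndepFun (V t) (M t) μ)
    -- the bid B_t depends only on past observations, hence is independent of (V_t, M_t)
    (hadapted : ∀ t, IndepFun (B t) (fun ω => (V t ω, M t ω)) μ) :
    sSup ((fun b => ∑ t ∈ Finset.Icc 1 T,
        ∫ ω, (V t ω - M t ω) * (if M t ω ≤ b then (1:ℝ) else 0) ∂μ) '' Icc (0:ℝ) 1)
      - ∑ t ∈ Finset.Icc 1 T,
          ∫ ω, (V t ω - M t ω) * (if M t ω ≤ B t ω then (1:ℝ) else 0) ∂μ
    ≤ (∑ t ∈ Finset.Icc 1 T,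
        ∫ ω, (M t ω - v) * (if v ≤ M t ω ∧ M t ω ≤ B t ω then (1:ℝ) else 0) ∂μ)
      + ∑ t ∈ Finset.Icc 1 T, (μ {ω | B t ω < v}).toReal :=
  stmt7_general μ V M B v T hVmeas hMmeas hBmeas hVrange hMrange hVmean hVM hadapted
end

section
/- Suppose F satisfies the margin condition with parameter α > 0 and constant β > 0 on [v, v+Δ] and F(v) > 0. Then the expected cumulative regret of any bidding strategy satisfies R_T ≤ Σ_{t=1}^T E[(β (B_t − v)_+^{α+1} / F(v)) · 1{M_t ≤ B_t}] + Σ_{t=1}^T P(B_t < v), where the margin condition holds on [v, 1] (i.e. Δ = 1 − v). -/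
open MeasureTheory ProbabilityTheory Set

/-!
Since `V_t` is independent of `M_t`, the expected utility of a fixed bid `b` is
`u(b) = E[(v - M) 1{M ≤ b}]`, which is maximal at `b = v`; so the comparator is at most
`∑_t u(v)`. Pointwise `(v - m) 1{m ≤ v} - (v - m) 1{m ≤ b} ≤ (b - v) (1{m ≤ b} - 1{m ≤ v})`,
hence `u(v) - u(b) ≤ (b - v) (F(b) - F(v))`. For `b < v` this is at most `1`; for `b ≥ v` the
margin condition bounds it by `β (b - v)^(α+1) = (β (b - v)^(α+1) / F(v)) F(v)`, and `F(v) ≤ F(b)`.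
Finally, as `B_t` is independent of `(V_t, M_t)`, the expectations at the random bid `B_t` are
averages over `b` of the same expressions at the frozen bid `b`.
-/

lemma ProbabilityTheory.IndepFun.le_integral_comp_of_le_integral_section
    {Ω α β : Type*} [MeasurableSpace Ω] [MeasurableSpace α] [MeasurableSpace β]
    {μ : Measure Ω} [IsProbabilityMeasure μ] {X : Ω → α} {Y : Ω → β} {h : α × β → ℝ} {w : ℝ}
    (hXY : IndepFun X Y μ) (hX : Measurable X) (hY : Measurable Y) (hh : Measurable h)
    (hint : Integrable (fun ω => h (X ω, Y ω)) μ) (hw : ∀ ω, w ≤ ∫ ω', h (X ω, Y ω') ∂μ) :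
    w ≤ ∫ ω, h (X ω, Y ω) ∂μ := by
  have hprod : μ.map (fun ω => (X ω, Y ω)) = (μ.map X).prod (μ.map Y) :=
    (indepFun_iff_map_prod_eq_prod_map_map hX.aemeasurable hY.aemeasurable).1 hXY
  have hXYm : Measurable fun ω => (X ω, Y ω) := hX.prodMk hY
  have hint' : Integrable h ((μ.map X).prod (μ.map Y)) := by
    rw [← hprod]
    exact (integrable_map_measure hh.aestronglyMeasurable hXYm.aemeasurable).2 hint
  have hsection : ∀ x, ∫ y, h (x, y) ∂(μ.map Y) = ∫ ω', h (x, Y ω') ∂μ := fun x =>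
    integral_map hY.aemeasurable (hh.comp measurable_prodMk_left).aestronglyMeasurable
  have hg := hint'.integral_prod_left
  have hgX : Integrable (fun ω => ∫ ω', h (X ω, Y ω') ∂μ) μ := by
    simpa only [hsection, Function.comp_def] using
      (integrable_map_measure hg.aestronglyMeasurable hX.aemeasurable).1 hg
  calc w = ∫ _, w ∂μ := by simp
    _ ≤ ∫ ω, ∫ ω', h (X ω, Y ω') ∂μ ∂μ := integral_mono (integrable_const w) hgX hw
    _ = ∫ x, ∫ y, h (x, y) ∂(μ.map Y) ∂(μ.map X) := by
      rw [integral_map hX.aemeasurable hg.aestronglyMeasurable]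
      simp only [hsection]
    _ = ∫ ω, h (X ω, Y ω) ∂μ := by
      rw [← integral_prod h hint', ← hprod, integral_map hXYm.aemeasurable hh.aestronglyMeasurable]

noncomputable def bidGain (v m b : ℝ) : ℝ := (v - m) * if m ≤ b then 1 else 0

lemma bidGain_le_bidGain_self (v m b : ℝ) : bidGain v m b ≤ bidGain v m v := by
  unfold bidGain; split_ifs <;> linarith

lemma bidGain_self_sub_bidGain_le (v m b : ℝ) :
    bidGain v m v - bidGain v m b
      ≤ (b - v) * ((if m ≤ b then 1 else 0) - if m ≤ v then 1 else 0) := by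
  unfold bidGain; split_ifs <;> linarith

lemma Measurable.bidGain {α : Type*} [MeasurableSpace α] {f g h : α → ℝ} (hf : Measurable f)
    (hg : Measurable g) (hh : Measurable h) :
    Measurable fun x => _root_.bidGain (f x) (g x) (h x) :=
  (hf.sub hg).mul (measurable_const.ite (measurableSet_le hg hh) measurable_const)

lemma mul_sub_le_of_margin {F : ℝ → ℝ} {v α β b : ℝ} (hα : α + 1 ≠ 0) (hβ : 0 ≤ β)
    (hF : Monotone F) (hF0 : ∀ x, 0 ≤ F x) (hF1 : ∀ x, F x ≤ 1) (hFv : 0 < F v)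
    (hmargin : ∀ x ∈ Icc v 1, F x - F v ≤ β * (x - v) ^ α) (hv : v ≤ 1) (hb : b ∈ Icc (0:ℝ) 1) :
    (b - v) * (F b - F v) ≤ β * max (b - v) 0 ^ (α + 1) / F v * F b + if b < v then 1 else 0 := by
  rcases lt_or_ge b v with hbv | hvb
  · have : 0 ≤ β * max (b - v) 0 ^ (α + 1) / F v * F b := by
      have := hF0 b
      positivity
    rw [if_pos hbv]
    nlinarith [hF hbv.le, hF0 b, hF1 v, hb.1]
  · rw [if_neg (not_lt.2 hvb), max_eq_left (sub_nonneg.2 hvb), add_zero]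
    calc (b - v) * (F b - F v) ≤ (b - v) * (β * (b - v) ^ α) :=
          mul_le_mul_of_nonneg_left (hmargin b ⟨hvb, hb.2⟩) (sub_nonneg.2 hvb)
      _ = β * (b - v) ^ (α + 1) / F v * F v := by
          rw [Real.rpow_add_one' (sub_nonneg.2 hvb) hα]; field_simp
      _ ≤ _ := mul_le_mul_of_nonneg_left (hF hvb) (by positivity)

lemma norm_margin_penalty_le {v α β b c : ℝ} (hα : 0 ≤ α + 1) (hβ : 0 ≤ β) (hc : 0 ≤ c)
    (hv : 0 ≤ v) (hb : b ≤ 1) : ‖β * max (b - v) 0 ^ (α + 1) / c‖ ≤ β / c := by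
  have hpow : max (b - v) 0 ^ (α + 1) ≤ 1 :=
    Real.rpow_le_one (le_max_right _ _) (max_le (by linarith) zero_le_one) hα
  have : 0 ≤ max (b - v) 0 ^ (α + 1) := Real.rpow_nonneg (le_max_right _ _) _
  rw [Real.norm_of_nonneg (by positivity)]
  exact div_le_div_of_nonneg_right (mul_le_of_le_one_right hβ hpow) hc

section

variable {Ω : Type*} [MeasurableSpace Ω] {μ : Measure Ω} {V M : Ω → ℝ}

lemma integral_ite_one_zero {p : Ω → Prop} [DecidablePred p] (hp : MeasurableSet {ω | p ω}) :
    ∫ ω, (if p ω then (1:ℝ) else 0) ∂μ = μ.real {ω | p ω} := by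
  rw [← integral_indicator_one hp]
  congr 1 with ω
  simp [Set.indicator_apply]

lemma MeasureTheory.Integrable.bidGain (hV : Integrable V μ) (hM : Integrable M μ) {B : Ω → ℝ}
    (hMm : Measurable M) (hB : Measurable B) :
    Integrable (fun ω => _root_.bidGain (V ω) (M ω) (B ω)) μ :=
  (hV.sub hM).mul_bdd (c := 1)
    (measurable_const.ite (measurableSet_le hMm hB) measurable_const).aestronglyMeasurable
    (ae_of_all _ fun ω => by split_ifs <;> simp)

variable [IsFiniteMeasure μ]

lemma integrable_ite_one_zero {p : Ω → Prop} [DecidablePred p] (hp : MeasurableSet {ω | p ω}) :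
    Integrable (fun ω => if p ω then (1:ℝ) else 0) μ :=
  (integrable_const 1).mono' (measurable_const.ite hp measurable_const).aestronglyMeasurable
    (ae_of_all _ fun ω => by split_ifs <;> simp)

lemma ProbabilityTheory.IndepFun.integral_bidGain (hVM : IndepFun V M μ) (hV : Integrable V μ)
    (hM : Integrable M μ) (hMm : Measurable M) (b : ℝ) :
    ∫ ω, bidGain (V ω) (M ω) b ∂μ = ∫ ω, bidGain (∫ ω', V ω' ∂μ) (M ω) b ∂μ := by
  have hψ : Measurable fun x : ℝ => if x ≤ b then (1:ℝ) else 0 :=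
    measurable_const.ite measurableSet_Iic measurable_const
  set I : Ω → ℝ := fun ω => if M ω ≤ b then 1 else 0
  have hI : Measurable I := hψ.comp hMm
  have hIb : ∀ᵐ ω ∂μ, ‖I ω‖ ≤ 1 := ae_of_all _ fun ω => by simp only [I]; split_ifs <;> simp
  have hMI : Integrable (fun ω => M ω * I ω) μ := hM.mul_bdd hI.aestronglyMeasurable hIb
  have hVI : ∫ ω, V ω * I ω ∂μ = (∫ ω, V ω ∂μ) * ∫ ω, I ω ∂μ :=
    (hVM.comp measurable_id hψ).integral_mul_eq_mul_integral hV.1 hI.aestronglyMeasurable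
  simp only [_root_.bidGain, sub_mul]
  rw [integral_sub (hV.mul_bdd hI.aestronglyMeasurable hIb) hMI,
    integral_sub ((integrable_const _).mul_bdd hI.aestronglyMeasurable hIb) hMI,
    integral_const_mul, hVI]

lemma integral_bidGain_le_integral_bidGain_mean (hVM : IndepFun V M μ) (hV : Integrable V μ)
    (hM : Integrable M μ) (hMm : Measurable M) (b : ℝ) :
    ∫ ω, bidGain (V ω) (M ω) b ∂μ ≤ ∫ ω, bidGain (∫ ω', V ω' ∂μ) (M ω) (∫ ω', V ω' ∂μ) ∂μ := by
  rw [hVM.integral_bidGain hV hM hMm]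
  exact integral_mono ((integrable_const _).bidGain hM hMm measurable_const)
    ((integrable_const _).bidGain hM hMm measurable_const) fun ω => bidGain_le_bidGain_self _ _ _

lemma integral_bidGain_self_sub_le (hM : Integrable M μ) (hMm : Measurable M) (v b : ℝ) :
    ∫ ω, bidGain v (M ω) v ∂μ - ∫ ω, bidGain v (M ω) b ∂μ
      ≤ (b - v) * (μ.real {ω | M ω ≤ b} - μ.real {ω | M ω ≤ v}) := by
  have hgain : ∀ d : ℝ, Integrable (fun ω => bidGain v (M ω) d) μ := fun d =>
    (integrable_const v).bidGain hM hMm measurable_const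
  have hind : ∀ d : ℝ, Integrable (fun ω => if M ω ≤ d then (1:ℝ) else 0) μ := fun d =>
    integrable_ite_one_zero (measurableSet_le hMm measurable_const)
  rw [← integral_sub (hgain v) (hgain b),
    ← integral_ite_one_zero (measurableSet_le hMm measurable_const),
    ← integral_ite_one_zero (measurableSet_le hMm measurable_const),
    ← integral_sub (hind b) (hind v), ← integral_const_mul]
  exact integral_mono ((hgain v).sub (hgain b)) (((hind b).sub (hind v)).const_mul _)
    fun ω => bidGain_self_sub_bidGain_le v (M ω) b

end

section

variable {Ω : Type*} [MeasurableSpace Ω] {μ : Measure Ω} [IsProbabilityMeasure μ]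

lemma integral_mem_Icc_of_forall_mem {f : Ω → ℝ} {a b : ℝ} (hf : Measurable f)
    (hfab : ∀ ω, f ω ∈ Icc a b) : ∫ ω, f ω ∂μ ∈ Icc a b := by
  have hfi : Integrable f μ := .of_mem_Icc a b hf.aemeasurable (ae_of_all _ hfab)
  constructor
  · simpa using integral_mono (integrable_const a) hfi fun ω => (hfab ω).1
  · simpa using integral_mono hfi (integrable_const b) fun ω => (hfab ω).2

variable {V M B : Ω → ℝ} {F : ℝ → ℝ} {v α β : ℝ}

lemma integral_bidGain_add_mul_ite_add (hV : Integrable V μ) (hM : Integrable M μ)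
    (hMm : Measurable M) (b c d : ℝ) :
    ∫ ω, bidGain (V ω) (M ω) b + c * (if M ω ≤ b then 1 else 0) + d ∂μ
      = ∫ ω, bidGain (V ω) (M ω) b ∂μ + c * μ.real {ω | M ω ≤ b} + d := by
  have hind := integrable_ite_one_zero (μ := μ) (measurableSet_le hMm (measurable_const (a := b)))
  rw [integral_add _ (integrable_const d),
    integral_add (hV.bidGain hM hMm measurable_const) (hind.const_mul c),
    integral_const_mul, integral_ite_one_zero (measurableSet_le hMm measurable_const)]
  · simp
  · exact (hV.bidGain hM hMm measurable_const).add (hind.const_mul c)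

lemma integral_bidGain_mean_le_of_margin (hα : α + 1 ≠ 0) (hβ : 0 ≤ β) (hV : Measurable V)
    (hM : Measurable M) (hVr : ∀ ω, V ω ∈ Icc (0:ℝ) 1) (hMr : ∀ ω, M ω ∈ Icc (0:ℝ) 1)
    (hmean : ∫ ω, V ω ∂μ = v) (hVM : IndepFun V M μ) (hF : ∀ x, μ.real {ω | M ω ≤ x} = F x)
    (hmargin : ∀ x ∈ Icc v 1, F x - F v ≤ β * (x - v) ^ α) (hFv : 0 < F v) {b : ℝ}
    (hb : b ∈ Icc (0:ℝ) 1) :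
    ∫ ω, bidGain v (M ω) v ∂μ
      ≤ ∫ ω, bidGain (V ω) (M ω) b ∂μ + β * max (b - v) 0 ^ (α + 1) / F v * F b
        + if b < v then 1 else 0 := by
  have hVi : Integrable V μ := .of_mem_Icc 0 1 hV.aemeasurable (ae_of_all _ hVr)
  have hMi : Integrable M μ := .of_mem_Icc 0 1 hM.aemeasurable (ae_of_all _ hMr)
  have hv : v ∈ Icc (0:ℝ) 1 := hmean ▸ integral_mem_Icc_of_forall_mem hV hVr
  have hFmono : Monotone F := fun x y hxy => by
    rw [← hF x, ← hF y]
    exact measureReal_mono fun ω hω => le_trans hω hxy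
  have hF0 : ∀ x, 0 ≤ F x := fun x => hF x ▸ measureReal_nonneg
  have hF1 : ∀ x, F x ≤ 1 := fun x => hF x ▸ measureReal_le_one
  have hgain := integral_bidGain_self_sub_le (μ := μ) hMi hM v b
  rw [hF, hF] at hgain
  rw [hVM.integral_bidGain hVi hMi hM, hmean]
  linarith [mul_sub_le_of_margin hα hβ hFmono hF0 hF1 hFv hmargin hv.2 hb]

theorem integral_bidGain_mean_le_of_margin_of_indepFun (hα : 0 < α + 1) (hβ : 0 ≤ β)
    (hV : Measurable V) (hM : Measurable M) (hB : Measurable B)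
    (hVr : ∀ ω, V ω ∈ Icc (0:ℝ) 1) (hMr : ∀ ω, M ω ∈ Icc (0:ℝ) 1)
    (hBr : ∀ ω, B ω ∈ Icc (0:ℝ) 1) (hmean : ∫ ω, V ω ∂μ = v) (hVM : IndepFun V M μ)
    (hBVM : IndepFun B (fun ω => (V ω, M ω)) μ) (hF : ∀ x, μ.real {ω | M ω ≤ x} = F x)
    (hmargin : ∀ x ∈ Icc v 1, F x - F v ≤ β * (x - v) ^ α) (hFv : 0 < F v) :
    ∫ ω, bidGain v (M ω) v ∂μ
      ≤ ∫ ω, bidGain (V ω) (M ω) (B ω) ∂μ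
        + ∫ ω, β * max (B ω - v) 0 ^ (α + 1) / F v * (if M ω ≤ B ω then 1 else 0) ∂μ
        + μ.real {ω | B ω < v} := by
  set c : ℝ → ℝ := fun b => β * max (b - v) 0 ^ (α + 1) / F v
  -- all three summands as one function of `(B, (V, M))`, so that one use of independence freezes `B`
  set g : ℝ × ℝ × ℝ → ℝ := fun q =>
    bidGain q.2.1 q.2.2 q.1 + c q.1 * (if q.2.2 ≤ q.1 then 1 else 0) + if q.1 < v then 1 else 0
  have hVi : Integrable V μ := .of_mem_Icc 0 1 hV.aemeasurable (ae_of_all _ hVr)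
  have hMi : Integrable M μ := .of_mem_Icc 0 1 hM.aemeasurable (ae_of_all _ hMr)
  have hv : v ∈ Icc (0:ℝ) 1 := hmean ▸ integral_mem_Icc_of_forall_mem hV hVr
  have hc : Measurable c := by fun_prop
  have hgain := hVi.bidGain hMi hM hB
  have hpenalty : Integrable (fun ω => c (B ω) * if M ω ≤ B ω then 1 else 0) μ :=
    (integrable_ite_one_zero (measurableSet_le hM hB)).bdd_mul (hc.comp hB).aestronglyMeasurable
      (ae_of_all _ fun ω => norm_margin_penalty_le hα.le hβ hFv.le hv.1 (hBr ω).2)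
  have hlow := integrable_ite_one_zero (μ := μ) (measurableSet_lt hB (measurable_const (a := v)))
  have hg : Measurable g :=
    ((measurable_snd.fst.bidGain measurable_snd.snd measurable_fst).add
      ((hc.comp measurable_fst).mul
        (measurable_const.ite (measurableSet_le measurable_snd.snd measurable_fst)
          measurable_const))).add
      (measurable_const.ite (measurableSet_lt measurable_fst measurable_const) measurable_const)
  have hsplit : ∫ ω, g (B ω, V ω, M ω) ∂μ = ∫ ω, bidGain (V ω) (M ω) (B ω) ∂μ
      + ∫ ω, c (B ω) * (if M ω ≤ B ω then 1 else 0) ∂μ + μ.real {ω | B ω < v} := by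
    rw [integral_add _ hlow, integral_add hgain hpenalty,
      integral_ite_one_zero (measurableSet_lt hB measurable_const)]
    exact hgain.add hpenalty
  rw [← hsplit]
  refine hBVM.le_integral_comp_of_le_integral_section hB (hV.prodMk hM) hg
    ((hgain.add hpenalty).add hlow) fun ω => ?_
  have hfrozen := integral_bidGain_mean_le_of_margin hα.ne' hβ hV hM hVr hMr hmean hVM hF
    hmargin hFv (hBr ω)
  rwa [← hF (B ω), ← integral_bidGain_add_mul_ite_add hVi hMi hM] at hfrozen

end

theorem stmt8_general
    {Ω : Type*} [MeasurableSpace Ω] (μ : Measure Ω) [IsProbabilityMeasure μ]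
    (V M B : ℕ → Ω → ℝ) (v : ℝ) (F : ℝ → ℝ) (α β : ℝ) (T : ℕ)
    (hα : 0 < α) (hβ : 0 < β)
    (hVmeas : ∀ t, Measurable (V t)) (hMmeas : ∀ t, Measurable (M t))
    (hBmeas : ∀ t, Measurable (B t))
    (hVrange : ∀ t ω, V t ω ∈ Icc (0:ℝ) 1)
    (hMrange : ∀ t ω, M t ω ∈ Icc (0:ℝ) 1)
    (hBrange : ∀ t ω, B t ω ∈ Icc (0:ℝ) 1)
    (hVmean : ∀ t, ∫ ω, V t ω ∂μ = v)
    (hVM : ∀ t, IndepFun (V t) (M t) μ)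
    -- the bid B_t depends only on past observations, hence is independent of (V_t, M_t)
    (hadapted : ∀ t, IndepFun (B t) (fun ω => (V t ω, M t ω)) μ)
    -- F is the cumulative distribution function of the maximal opponent bids
    (hF : ∀ t x, (μ {ω | M t ω ≤ x}).toReal = F x)
    -- margin condition with parameter α and constant β on [v, 1]
    (hmargin : ∀ x ∈ Icc v 1, F x - F v ≤ β * (x - v) ^ α)
    (hFv : 0 < F v) :
    sSup ((fun b => ∑ t ∈ Finset.Icc 1 T,
        ∫ ω, (V t ω - M t ω) * (if M t ω ≤ b then (1:ℝ) else 0) ∂μ) '' Icc (0:ℝ) 1)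
      - ∑ t ∈ Finset.Icc 1 T,
          ∫ ω, (V t ω - M t ω) * (if M t ω ≤ B t ω then (1:ℝ) else 0) ∂μ
    ≤ (∑ t ∈ Finset.Icc 1 T,
        ∫ ω, (β * (max (B t ω - v) 0) ^ (α + 1) / F v)
          * (if M t ω ≤ B t ω then (1:ℝ) else 0) ∂μ)
      + ∑ t ∈ Finset.Icc 1 T, (μ {ω | B t ω < v}).toReal := by
  have hround := Finset.sum_le_sum fun t (_ : t ∈ Finset.Icc 1 T) =>
    integral_bidGain_mean_le_of_margin_of_indepFun (by linarith) hβ.le (hVmeas t) (hMmeas t)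
      (hBmeas t) (hVrange t) (hMrange t) (hBrange t) (hVmean t) (hVM t) (hadapted t) (hF t)
      hmargin hFv
  rw [Finset.sum_add_distrib, Finset.sum_add_distrib] at hround
  calc
    _ ≤ (∑ t ∈ Finset.Icc 1 T, ∫ ω, bidGain v (M t ω) v ∂μ)
        - ∑ t ∈ Finset.Icc 1 T,
          ∫ ω, (V t ω - M t ω) * (if M t ω ≤ B t ω then (1:ℝ) else 0) ∂μ := by
      gcongr
      refine csSup_le ((nonempty_Icc.2 zero_le_one).image _) ?_
      rintro _ ⟨b, -, rfl⟩
      refine Finset.sum_le_sum fun t _ => ?_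
      rw [← hVmean t]
      exact integral_bidGain_le_integral_bidGain_mean (hVM t)
        (.of_mem_Icc 0 1 (hVmeas t).aemeasurable (ae_of_all _ (hVrange t)))
        (.of_mem_Icc 0 1 (hMmeas t).aemeasurable (ae_of_all _ (hMrange t))) (hMmeas t) b
    _ ≤ _ := by
      simp only [bidGain, measureReal_def] at hround ⊢
      linarith

/-- If `F` satisfies the margin condition with parameter `α > 0` and constant `β > 0`
on `[v, 1]` and `F(v) > 0`, then the expected cumulative regret of any bidding strategy
satisfies
`R_T ≤ Σ_{t=1}^T E[(β (B_t − v)_+^{α+1} / F(v))·1{M_t ≤ B_t}] + Σ_{t=1}^T P(B_t < v)`. -/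
theorem stmt8
    {Ω : Type*} [MeasurableSpace Ω] (μ : Measure Ω) [IsProbabilityMeasure μ]
    (V M B : ℕ → Ω → ℝ) (v : ℝ) (F : ℝ → ℝ) (α β : ℝ) (T : ℕ)
    (hα : 0 < α) (hβ : 0 < β)
    (hVmeas : ∀ t, Measurable (V t)) (hMmeas : ∀ t, Measurable (M t))
    (hBmeas : ∀ t, Measurable (B t))
    (hVrange : ∀ t ω, V t ω ∈ Icc (0:ℝ) 1)
    (hMrange : ∀ t ω, M t ω ∈ Icc (0:ℝ) 1)
    (hBrange : ∀ t ω, B t ω ∈ Icc (0:ℝ) 1)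
    (hVmean : ∀ t, ∫ ω, V t ω ∂μ = v)
    (hiid : ∀ s t, Measure.map (fun ω => (V s ω, M s ω)) μ
        = Measure.map (fun ω => (V t ω, M t ω)) μ)
    (hpairindep : iIndepFun (fun t ω => (V t ω, M t ω)) μ)
    (hVM : ∀ t, IndepFun (V t) (M t) μ)
    -- the bid B_t depends only on past observations, hence is independent of (V_t, M_t)
    (hadapted : ∀ t, IndepFun (B t) (fun ω => (V t ω, M t ω)) μ)
    -- F is the cumulative distribution function of the maximal opponent bids
    (hF : ∀ t x, (μ {ω | M t ω ≤ x}).toReal = F x)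
    -- margin condition with parameter α and constant β on [v, 1]
    (hmargin : ∀ x ∈ Icc v 1, F x - F v ≤ β * (x - v) ^ α)
    (hFv : 0 < F v) :
    sSup ((fun b => ∑ t ∈ Finset.Icc 1 T,
        ∫ ω, (V t ω - M t ω) * (if M t ω ≤ b then (1:ℝ) else 0) ∂μ) '' Icc (0:ℝ) 1)
      - ∑ t ∈ Finset.Icc 1 T,
          ∫ ω, (V t ω - M t ω) * (if M t ω ≤ B t ω then (1:ℝ) else 0) ∂μ
    ≤ (∑ t ∈ Finset.Icc 1 T,
        ∫ ω, (β * (max (B t ω - v) 0) ^ (α + 1) / F v)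
          * (if M t ω ≤ B t ω then (1:ℝ) else 0) ∂μ)
      + ∑ t ∈ Finset.Icc 1 T, (μ {ω | B t ω < v}).toReal :=
  stmt8_general μ V M B v F α β T hα hβ hVmeas hMmeas hBmeas hVrange hMrange hBrange hVmean hVM
    hadapted hF hmargin hFv
end
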